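/- arXiv:2508.19898 — 5 statements merged into one kernel-verified Lean document; each statement's English description precedes it below -/
import Mathlib

section
/- Let x be a uniformly random vector in {-1,1}ⁿ and y ∈ ℝⁿ a vector with ‖y‖ = 1. Then the probability that |⟨x, y⟩| ≥ 1/2 is at least 3/16. -/
open Matrix

namespace Stmt1Aux

noncomputable def sgn (b : Bool) : ℝ := if b then 1 else -1

noncomputable def S {n : ℕ} (y : Fin n → ℝ) (σ : Fin n → Bool) : ℝ :=
  ∑ i, sgn (σ i) * y i

lemma sum_split {n : ℕ} (F : ℝ → ℝ) (y : Fin (n+1) → ℝ) :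
    ∑ σ : Fin (n+1) → Bool, F (S y σ) =
      ∑ σ : Fin n → Bool,
        (F (y 0 + S (y ∘ Fin.succ) σ) + F (-y 0 + S (y ∘ Fin.succ) σ)) := by
  rw [← Fintype.sum_equiv (Fin.consEquiv fun _ => Bool)
      (fun p => F (S y ((Fin.consEquiv fun _ => Bool) p))) (fun σ => F (S y σ)) (fun _ => rfl)]
  rw [Fintype.sum_prod_type_right]
  refine Finset.sum_congr rfl fun σ _ => ?_
  have hS : ∀ b : Bool, S y ((Fin.consEquiv fun _ => Bool) (b, σ))
      = sgn b * y 0 + S (y ∘ Fin.succ) σ := by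
    intro b
    simp [S, Fin.sum_univ_succ, Fin.consEquiv, Fin.cons_succ]
  rw [Fintype.sum_bool, hS true, hS false]
  simp [sgn]

lemma M2 {n : ℕ} (y : Fin n → ℝ) :
    ∑ σ : Fin n → Bool, (S y σ) ^ 2 = 2 ^ n * ∑ i, (y i) ^ 2 := by
  induction n with
  | zero => simp [S]
  | succ n ih =>
    rw [sum_split (fun t => t ^ 2) y]
    have : ∀ σ : Fin n → Bool,
        (y 0 + S (y ∘ Fin.succ) σ) ^ 2 + (-y 0 + S (y ∘ Fin.succ) σ) ^ 2
        = 2 * (y 0) ^ 2 + 2 * (S (y ∘ Fin.succ) σ) ^ 2 := by intro σ; ring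
    simp_rw [this]
    rw [Finset.sum_add_distrib, Finset.sum_const, ← Finset.mul_sum, ih (y ∘ Fin.succ),
      Fin.sum_univ_succ]
    simp [Function.comp]
    ring

lemma M4 {n : ℕ} (y : Fin n → ℝ) :
    ∑ σ : Fin n → Bool, (S y σ) ^ 4 ≤ 3 * 2 ^ n * (∑ i, (y i) ^ 2) ^ 2 := by
  induction n with
  | zero => simp [S]
  | succ n ih =>
    rw [sum_split (fun t => t ^ 4) y]
    have hQ : (0:ℝ) ≤ ∑ i, (y ∘ Fin.succ) i ^ 2 :=
      Finset.sum_nonneg fun _ _ => sq_nonneg _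
    have key : ∀ σ : Fin n → Bool,
        (y 0 + S (y ∘ Fin.succ) σ) ^ 4 + (-y 0 + S (y ∘ Fin.succ) σ) ^ 4
        = 2 * (S (y ∘ Fin.succ) σ) ^ 4 + 12 * (y 0) ^ 2 * (S (y ∘ Fin.succ) σ) ^ 2
          + 2 * (y 0) ^ 4 := by intro σ; ring
    simp_rw [key]
    rw [Finset.sum_add_distrib, Finset.sum_add_distrib, Finset.sum_const,
      ← Finset.mul_sum, ← Finset.mul_sum, M2 (y ∘ Fin.succ), nsmul_eq_mul]
    have h4 := ih (y ∘ Fin.succ)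
    have hsum : (∑ i : Fin (n+1), y i ^ 2)
        = (y 0) ^ 2 + ∑ i, (y ∘ Fin.succ) i ^ 2 := by
      rw [Fin.sum_univ_succ]; rfl
    rw [hsum]
    have hy4 : (2:ℝ) * (y 0) ^ 4 ≤ 6 * (y 0) ^ 4 := by nlinarith [sq_nonneg ((y 0)^2)]
    have card2 : ((Finset.univ : Finset (Fin n → Bool)).card : ℝ) = 2 ^ n := by
      simp [Finset.card_univ]
    rw [card2]
    have h21 : (2:ℝ) ^ (n+1) = 2 * 2 ^ n := pow_succ' 2 n
    rw [h21]
    nlinarith [h4, sq_nonneg (y 0), hQ, pow_pos (show (0:ℝ) < 2 by norm_num) n,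
      mul_nonneg (pow_pos (show (0:ℝ) < 2 by norm_num) n).le (sq_nonneg ((y 0) ^ 2)),
      mul_nonneg (mul_nonneg (pow_pos (show (0:ℝ) < 2 by norm_num) n).le (sq_nonneg (y 0))) hQ]

end Stmt1Aux

/-- For a uniformly random sign vector `x ∈ {-1,1}ⁿ` and a unit vector `y`,
`|⟨x,y⟩| ≥ 1/2` with probability at least `3/16`. -/
theorem stmt1 {n : ℕ} (hn : 0 < n) (y : Fin n → ℝ) (hy : y ⬝ᵥ y = 1) :
    (3 : ℝ) / 16 ≤
      ((Finset.univ.filter fun σ : Fin n → Bool =>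
          (1 : ℝ) / 2 ≤ |(fun i => if σ i then (1 : ℝ) else -1) ⬝ᵥ y|).card : ℝ)
        / 2 ^ n := by
  classical
  open Stmt1Aux in
  have hdot : ∀ σ : Fin n → Bool,
      (fun i => if σ i then (1 : ℝ) else -1) ⬝ᵥ y = S y σ := by
    intro σ; simp [dotProduct, S, sgn]
  have hy2 : (∑ i, (y i) ^ 2) = 1 := by
    rw [← hy]; simp [dotProduct, sq]
  have h2 := M2 y
  have h4 := M4 y
  rw [hy2] at h2 h4
  set A := Finset.univ.filter fun σ : Fin n → Bool =>
      (1 : ℝ) / 2 ≤ |(fun i => if σ i then (1 : ℝ) else -1) ⬝ᵥ y| with hA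
  -- on the complement, S^2 ≤ 1/4
  have hcomp : ∀ σ ∈ Finset.univ \ A, (S y σ) ^ 2 ≤ 1 / 4 := by
    intro σ hσ
    simp only [hA, Finset.mem_sdiff, Finset.mem_filter, Finset.mem_univ, true_and,
      not_le] at hσ
    rw [hdot σ] at hσ
    have : |S y σ| ^ 2 ≤ (1/2 : ℝ) ^ 2 := by
      apply pow_le_pow_left₀ (abs_nonneg _) (le_of_lt hσ)
    rw [sq_abs] at this; linarith
  have hAsub : A ⊆ Finset.univ := Finset.filter_subset _ _
  have hsplit : ∑ σ : Fin n → Bool, (S y σ) ^ 2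
      = ∑ σ ∈ A, (S y σ) ^ 2 + ∑ σ ∈ Finset.univ \ A, (S y σ) ^ 2 := by
    rw [← Finset.sum_sdiff hAsub]; ring
  have hcard : ((Finset.univ : Finset (Fin n → Bool)).card : ℝ) = 2 ^ n := by
    simp [Finset.card_univ]
  have hcompsum : ∑ σ ∈ Finset.univ \ A, (S y σ) ^ 2 ≤ 2 ^ n / 4 := by
    calc ∑ σ ∈ Finset.univ \ A, (S y σ) ^ 2 ≤ ∑ _σ ∈ Finset.univ \ A, (1/4 : ℝ) :=
          Finset.sum_le_sum hcomp
      _ = ((Finset.univ \ A).card : ℝ) * (1/4) := by rw [Finset.sum_const]; ring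
      _ ≤ 2 ^ n / 4 := by
          have : ((Finset.univ \ A).card : ℝ) ≤ 2 ^ n := by
            rw [← hcard]; exact_mod_cast Finset.card_le_card (Finset.sdiff_subset)
          linarith
  have hAsum : (3:ℝ)/4 * 2 ^ n ≤ ∑ σ ∈ A, (S y σ) ^ 2 := by
    have := hsplit
    rw [h2] at this
    linarith
  -- Cauchy-Schwarz on A
  have hCS : (∑ σ ∈ A, (S y σ) ^ 2) ^ 2 ≤ (A.card : ℝ) * ∑ σ ∈ A, (S y σ) ^ 4 := by
    have := Finset.sum_mul_sq_le_sq_mul_sq A (fun _ => (1:ℝ)) (fun σ => (S y σ) ^ 2)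
    simpa [Finset.sum_const, mul_comm, ← pow_mul] using this
  have hsub4 : ∑ σ ∈ A, (S y σ) ^ 4 ≤ 3 * 2 ^ n * 1 ^ 2 := by
    refine le_trans (Finset.sum_le_sum_of_subset_of_nonneg hAsub
      fun σ _ _ => by positivity) h4
  have hpow : (0:ℝ) < 2 ^ n := by positivity
  have hfinal : (3:ℝ)/16 * 2 ^ n ≤ (A.card : ℝ) := by
    have h1 : ((3:ℝ)/4 * 2 ^ n) ^ 2 ≤ (A.card : ℝ) * (3 * 2 ^ n) := by
      calc ((3:ℝ)/4 * 2 ^ n) ^ 2 ≤ (∑ σ ∈ A, (S y σ) ^ 2) ^ 2 := by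
            apply pow_le_pow_left₀ (by positivity) hAsum
        _ ≤ (A.card : ℝ) * ∑ σ ∈ A, (S y σ) ^ 4 := hCS
        _ ≤ (A.card : ℝ) * (3 * 2 ^ n) := by
            have : ∑ σ ∈ A, (S y σ) ^ 4 ≤ 3 * 2 ^ n := by simpa using hsub4
            exact mul_le_mul_of_nonneg_left this (Nat.cast_nonneg _)
    nlinarith [hpow]
  rw [le_div_iff₀ hpow]
  linarith
end

section
/- Let M be a real symmetric positive semidefinite n×n matrix with eigenvalues 0 ≤ μ₁ ≤ … ≤ μₙ and orthonormal eigenbasis v₁,…,vₙ. Let x₀ ∈ ℝⁿ, ε > 0, k ≥ log(n)/ε, and x_k = M^k x₀ with x_k ≠ 0. Then (x_kᵀ M x_k)/(x_kᵀ x_k) ≥ (1-ε)·μₙ · 1/(1 + (‖x₀‖²/⟨x₀,vₙ⟩²)·(1-ε)^{2k}), provided ⟨x₀, vₙ⟩ ≠ 0. -/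
/-!
With `cᵢ = ⟨x₀, vᵢ⟩`, Parseval in the eigenbasis turns the Rayleigh quotient of `x_k` into `N / D`
with `N = ∑ cᵢ² μᵢ^(2k+1)` and `D = ∑ cᵢ² μᵢ^(2k)`. For `s = (1 - ε) μₙ ≥ 0` each term satisfies
`s μᵢ^(2k) ≤ μᵢ^(2k+1) + s^(2k+1)` (compare `μᵢ` with `s`), so `s D ≤ N + s^(2k+1) ‖x₀‖²`, and
this error term is at most `N (‖x₀‖² / cₙ²) (1 - ε)^(2k)` because `N ≥ cₙ² μₙ^(2k+1)`.
-/

open Matrix Finset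

section OrthonormalEigenbasis

variable {ι R : Type*} [Fintype ι] [DecidableEq ι] [CommRing R] {v : ι → ι → R}

theorem dotProduct_eq_sum_mul_of_orthonormal
    (horth : ∀ i j, v i ⬝ᵥ v j = if i = j then (1 : R) else 0) (x y : ι → R) :
    x ⬝ᵥ y = ∑ i, (x ⬝ᵥ v i) * (y ⬝ᵥ v i) := by
  have hV : (of v)ᵀ * of v = 1 := mul_eq_one_comm.mp <| by
    ext i j
    simpa [mul_apply, one_apply, dotProduct] using horth i j
  calc x ⬝ᵥ y = x ⬝ᵥ ((of v)ᵀ * of v) *ᵥ y := by rw [hV, one_mulVec]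
    _ = (of v *ᵥ x) ⬝ᵥ (of v *ᵥ y) := by
      rw [← mulVec_mulVec, dotProduct_mulVec, vecMul_transpose]
    _ = ∑ i, (x ⬝ᵥ v i) * (y ⬝ᵥ v i) := by
      simp only [dotProduct, mulVec, of_apply, mul_comm (v _ _)]

theorem pow_mulVec_of_mulVec_eq_smul {M : Matrix ι ι R} {μ : R} {u : ι → R}
    (hu : M *ᵥ u = μ • u) (a : ℕ) : (M ^ a) *ᵥ u = μ ^ a • u := by
  induction a with
  | zero => simp
  | succ a ih => rw [pow_succ, ← mulVec_mulVec, hu, mulVec_smul, ih, smul_smul, pow_succ']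

theorem pow_mulVec_dotProduct_of_mulVec_eq_smul {M : Matrix ι ι R} (hM : M.IsSymm) {μ : R}
    {u : ι → R} (hu : M *ᵥ u = μ • u) (x : ι → R) (a : ℕ) :
    (M ^ a) *ᵥ x ⬝ᵥ u = μ ^ a * (x ⬝ᵥ u) := by
  rw [dotProduct_comm, dotProduct_mulVec, ← transpose_transpose (M ^ a), vecMul_transpose,
    transpose_pow, hM.eq, pow_mulVec_of_mulVec_eq_smul hu, smul_dotProduct, smul_eq_mul,
    dotProduct_comm]

theorem pow_mulVec_dotProduct_pow_mulVec {M : Matrix ι ι R} (hM : M.IsSymm) {μ : ι → R}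
    (horth : ∀ i j, v i ⬝ᵥ v j = if i = j then (1 : R) else 0)
    (heig : ∀ i, M *ᵥ v i = μ i • v i) (x : ι → R) (a b : ℕ) :
    (M ^ a) *ᵥ x ⬝ᵥ (M ^ b) *ᵥ x = ∑ i, (x ⬝ᵥ v i) ^ 2 * μ i ^ (a + b) := by
  rw [dotProduct_eq_sum_mul_of_orthonormal horth]
  refine sum_congr rfl fun i _ => ?_
  rw [pow_mulVec_dotProduct_of_mulVec_eq_smul hM (heig i),
    pow_mulVec_dotProduct_of_mulVec_eq_smul hM (heig i)]
  ring

end OrthonormalEigenbasis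

theorem Matrix.PosSemidef.nonneg_of_mulVec_eq_smul {ι : Type*} [Fintype ι] {M : Matrix ι ι ℝ}
    (hM : M.PosSemidef) {μ : ℝ} {u : ι → ℝ} (hu0 : u ≠ 0) (hu : M *ᵥ u = μ • u) : 0 ≤ μ := by
  have h := hM.dotProduct_mulVec_nonneg u
  rw [hu, dotProduct_smul, smul_eq_mul, star_trivial] at h
  exact nonneg_of_mul_nonneg_left h (by simpa using dotProduct_self_star_pos_iff.mpr hu0)

theorem mul_pow_le_pow_succ_add_pow_succ {s t : ℝ} (hs : 0 ≤ s) (ht : 0 ≤ t) (m : ℕ) :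
    s * t ^ m ≤ t ^ (m + 1) + s ^ (m + 1) := by
  rcases le_total s t with hst | hts
  · have : s * t ^ m ≤ t ^ (m + 1) := by rw [pow_succ']; gcongr
    linarith [pow_nonneg hs (m + 1)]
  · have : s * t ^ m ≤ s ^ (m + 1) := by rw [pow_succ']; gcongr
    linarith [pow_nonneg ht (m + 1)]

section WeightedPowers

variable {ι : Type*} [Fintype ι] {w μ : ι → ℝ} {j : ι}

theorem weighted_pow_ratio_nonneg (hw : ∀ i, 0 ≤ w i) (hμ : ∀ i, 0 ≤ μ i) (m : ℕ) :
    0 ≤ (∑ i, w i * μ i ^ (m + 1)) / ∑ i, w i * μ i ^ m :=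
  div_nonneg (sum_nonneg fun i _ => mul_nonneg (hw i) (pow_nonneg (hμ i) _))
    (sum_nonneg fun i _ => mul_nonneg (hw i) (pow_nonneg (hμ i) _))

theorem le_weighted_pow_ratio_of_nonneg (hw : ∀ i, 0 ≤ w i) (hμ : ∀ i, 0 ≤ μ i) (hwj : 0 < w j)
    {δ : ℝ} (hδ0 : 0 ≤ δ) (hδ1 : δ ≤ 1) (m : ℕ) :
    δ * μ j * (1 / (1 + (∑ i, w i) / w j * δ ^ m)) ≤
      (∑ i, w i * μ i ^ (m + 1)) / ∑ i, w i * μ i ^ m := by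
  set t := μ j
  set N := ∑ i, w i * μ i ^ (m + 1)
  set D := ∑ i, w i * μ i ^ m
  set q := (∑ i, w i) / w j * δ ^ m
  rcases (hμ j).eq_or_lt with ht | ht
  · rw [show t = 0 from ht.symm, mul_zero, zero_mul]
    exact weighted_pow_ratio_nonneg hw hμ m
  have hq : 0 ≤ q := mul_nonneg (div_nonneg (sum_nonneg fun i _ => hw i) hwj.le) (by positivity)
  have hDj : w j * t ^ m ≤ D :=
    single_le_sum (f := fun i => w i * μ i ^ m)
      (fun i _ => mul_nonneg (hw i) (pow_nonneg (hμ i) _)) (mem_univ j)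
  have hNj : w j * t ^ (m + 1) ≤ N :=
    single_le_sum (f := fun i => w i * μ i ^ (m + 1))
      (fun i _ => mul_nonneg (hw i) (pow_nonneg (hμ i) _)) (mem_univ j)
  have hsplit : δ * t * D ≤ N + (δ * t) ^ (m + 1) * ∑ i, w i := by
    rw [mul_sum, mul_sum, ← sum_add_distrib]
    refine sum_le_sum fun i _ => ?_
    calc δ * t * (w i * μ i ^ m) = w i * (δ * t * μ i ^ m) := by ring
      _ ≤ w i * (μ i ^ (m + 1) + (δ * t) ^ (m + 1)) :=
        mul_le_mul_of_nonneg_left (mul_pow_le_pow_succ_add_pow_succ (by positivity) (hμ i) m)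
          (hw i)
      _ = w i * μ i ^ (m + 1) + (δ * t) ^ (m + 1) * w i := by ring
  have htail : (δ * t) ^ (m + 1) * ∑ i, w i ≤ N * q :=
    calc (δ * t) ^ (m + 1) * ∑ i, w i = δ * (w j * t ^ (m + 1) * q) := by
          simp only [q]; field_simp; ring
      _ ≤ w j * t ^ (m + 1) * q := mul_le_of_le_one_left (by positivity) hδ1
      _ ≤ N * q := mul_le_mul_of_nonneg_right hNj hq
  rw [mul_one_div, div_le_div_iff₀ (by linarith) ((by positivity : 0 < w j * t ^ m).trans_le hDj)]
  linarith

theorem le_weighted_pow_ratio (hw : ∀ i, 0 ≤ w i) (hμ : ∀ i, 0 ≤ μ i) (hwj : 0 < w j)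
    {δ : ℝ} (hδ1 : δ ≤ 1) {m : ℕ} (hm : Even m) :
    δ * μ j * (1 / (1 + (∑ i, w i) / w j * δ ^ m)) ≤
      (∑ i, w i * μ i ^ (m + 1)) / ∑ i, w i * μ i ^ m := by
  rcases le_total 0 δ with hδ0 | hδ0
  · exact le_weighted_pow_ratio_of_nonneg hw hμ hwj hδ0 hδ1 m
  have hq : 0 ≤ 1 + (∑ i, w i) / w j * δ ^ m :=
    add_nonneg zero_le_one <|
      mul_nonneg (div_nonneg (sum_nonneg fun i _ => hw i) hwj.le) (hm.pow_nonneg δ)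
  calc δ * μ j * (1 / (1 + (∑ i, w i) / w j * δ ^ m)) ≤ 0 :=
        mul_nonpos_of_nonpos_of_nonneg (mul_nonpos_of_nonpos_of_nonneg hδ0 (hμ j))
          (one_div_nonneg.mpr hq)
    _ ≤ _ := weighted_pow_ratio_nonneg hw hμ m

end WeightedPowers

/-- Power-method progress lemma: lower bound on the Rayleigh quotient of `M^k x₀`. -/
theorem stmt4 {n : ℕ} (hn : 0 < n) (M : Matrix (Fin n) (Fin n) ℝ)
    (hM : M.PosSemidef)
    (μ : Fin n → ℝ) (v : Fin n → Fin n → ℝ)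
    (horth : ∀ i j, v i ⬝ᵥ v j = if i = j then (1 : ℝ) else 0)
    (heig : ∀ i, M *ᵥ v i = μ i • v i)
    (x₀ : Fin n → ℝ) (ε : ℝ) (hε : 0 < ε) (k : ℕ)
    (xk : Fin n → ℝ) (hxk : xk = (M ^ k) *ᵥ x₀)
    (hx0 : x₀ ⬝ᵥ v ⟨n - 1, by omega⟩ ≠ 0) :
    (1 - ε) * μ ⟨n - 1, by omega⟩ *
        (1 / (1 + (x₀ ⬝ᵥ x₀) / (x₀ ⬝ᵥ v ⟨n - 1, by omega⟩) ^ 2 * (1 - ε) ^ (2 * k))) ≤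
      xk ⬝ᵥ M *ᵥ xk / (xk ⬝ᵥ xk) := by
  have hsymm : M.IsSymm := isHermitian_iff_isSymm.mp hM.isHermitian
  have hμ : ∀ i, 0 ≤ μ i := fun i =>
    hM.nonneg_of_mulVec_eq_smul (fun h => by simpa [h] using horth i i) (heig i)
  have hW : x₀ ⬝ᵥ x₀ = ∑ i, (x₀ ⬝ᵥ v i) ^ 2 := by
    simpa [sq] using dotProduct_eq_sum_mul_of_orthonormal horth x₀ x₀
  subst hxk
  rw [mulVec_mulVec, ← pow_succ', pow_mulVec_dotProduct_pow_mulVec hsymm horth heig,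
    pow_mulVec_dotProduct_pow_mulVec hsymm horth heig, hW, ← add_assoc, ← two_mul]
  exact le_weighted_pow_ratio (fun i => sq_nonneg _) hμ (by positivity) (by linarith)
    (even_two_mul k)
end

section
/- Let L be the normalized Laplacian of a finite, connected, weighted, undirected graph G with second-smallest eigenvalue λ₂ and sparsest cut (conductance) φ. Then λ₂/2 ≤ φ ≤ √(2λ₂). -/
/-!
Lower bound: for a cut `(S, Sᶜ)`, some nonzero combination of `D^{1/2} 𝟙_S` and `D^{1/2} 𝟙_{Sᶜ}`
is orthogonal to the bottom eigenvector, so by the spectral decomposition its Rayleigh quotient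
`(a - b)² cut S / (a² vol S + b² vol Sᶜ)` is at least `λ₂`, and it is at most
`2 cut S / min (vol S) (vol Sᶜ)`.

Upper bound: some nonzero combination `D^{1/2} f` of the two bottom eigenvectors is orthogonal to
`D^{1/2} 𝟙`, so `∑ d f = 0` and its Rayleigh quotient is at most `λ₂`. Shifting `f` by a weighted
median `c` only increases `∑ d f²`, so the positive or the negative part `g` of `f - c` still has
Rayleigh quotient at most `λ₂` and is supported on at most half of the volume. By Cauchy–Schwarz,
`∑ A_uw (g_u² - g_w²)⁺ ≤ √(2λ₂) ∑ d g²`; the left side is the integral over `t` of the cut of the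
level set `{g² > t}` and the right side `√(2λ₂)` times the integral of its volume, so some level
set `S` has `cut S ≤ √(2λ₂) vol S`.
-/

open Matrix

/-- Weighted degree of a vertex. -/
noncomputable def wdeg {V : Type*} [Fintype V] (A : Matrix V V ℝ) (u : V) : ℝ :=
  ∑ v, A u v

/-- Total weight of edges crossing the cut `(S, Sᶜ)`. -/
noncomputable def cutW {V : Type*} [Fintype V] [DecidableEq V]
    (A : Matrix V V ℝ) (S : Finset V) : ℝ :=
  ∑ u ∈ S, ∑ v ∈ Sᶜ, A u v

/-- Volume of a vertex set: the sum of the weighted degrees. -/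
noncomputable def volW {V : Type*} [Fintype V] (A : Matrix V V ℝ) (S : Finset V) : ℝ :=
  ∑ u ∈ S, wdeg A u

/-- The conductance (sparsest cut value) of a weighted graph. -/
noncomputable def conductance {V : Type*} [Fintype V] [DecidableEq V]
    (A : Matrix V V ℝ) : ℝ :=
  sInf {r | ∃ S : Finset V, S.Nonempty ∧ S ≠ Finset.univ ∧
    r = cutW A S / min (volW A S) (volW A Sᶜ)}

/-- The normalized Laplacian `I - D^{-1/2} A D^{-1/2}`. -/
noncomputable def normLap {V : Type*} [Fintype V] [DecidableEq V]
    (A : Matrix V V ℝ) : Matrix V V ℝ :=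
  1 - Matrix.diagonal (fun u => 1 / Real.sqrt (wdeg A u)) * A *
    Matrix.diagonal (fun u => 1 / Real.sqrt (wdeg A u))

namespace Cheeger

variable {V : Type*} [Fintype V] {A : Matrix V V ℝ}

noncomputable def energy (A : Matrix V V ℝ) (f : V → ℝ) : ℝ :=
  ∑ u, ∑ w, A u w * (f u - f w) ^ 2

noncomputable def wnormSq (A : Matrix V V ℝ) (f : V → ℝ) : ℝ :=
  ∑ u, wdeg A u * f u ^ 2

/-- For `h ≥ 0` this is `∫₀^∞ cutW A {u | t < h u} dt`: the pair `(u, w)` is cut for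
`t ∈ [h w, h u)`. -/
noncomputable def crossing (A : Matrix V V ℝ) (h : V → ℝ) : ℝ :=
  ∑ u, ∑ w, A u w * (h u - h w)⁺

section Weights

lemma wdeg_nonneg (hnn : ∀ u v, 0 ≤ A u v) (u : V) : 0 ≤ wdeg A u :=
  Finset.sum_nonneg fun w _ => hnn u w

lemma volW_nonneg (hnn : ∀ u v, 0 ≤ A u v) (S : Finset V) : 0 ≤ volW A S :=
  Finset.sum_nonneg fun u _ => wdeg_nonneg hnn u

lemma volW_pos (hdeg : ∀ u, 0 < wdeg A u) {S : Finset V} (hS : S.Nonempty) : 0 < volW A S :=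
  Finset.sum_pos (fun u _ => hdeg u) hS

lemma volW_mono (hnn : ∀ u v, 0 ≤ A u v) {S T : Finset V} (h : S ⊆ T) :
    volW A S ≤ volW A T :=
  Finset.sum_le_sum_of_subset_of_nonneg h fun u _ _ => wdeg_nonneg hnn u

lemma volW_add_volW_compl [DecidableEq V] (S : Finset V) :
    volW A S + volW A Sᶜ = volW A Finset.univ :=
  Finset.sum_add_sum_compl S _

lemma cutW_nonneg [DecidableEq V] (hnn : ∀ u v, 0 ≤ A u v) (S : Finset V) : 0 ≤ cutW A S :=
  Finset.sum_nonneg fun u _ => Finset.sum_nonneg fun w _ => hnn u w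

lemma cutW_compl [DecidableEq V] (hsym : A.IsSymm) (S : Finset V) : cutW A Sᶜ = cutW A S := by
  rw [cutW, cutW, compl_compl]
  exact Finset.sum_comm.trans
    (Finset.sum_congr rfl fun u _ => Finset.sum_congr rfl fun w _ => hsym.apply u w)

lemma sum_sum_mul_left (h : V → ℝ) : ∑ u, ∑ w, A u w * h u = ∑ u, wdeg A u * h u := by
  simp only [wdeg, Finset.sum_mul]

lemma sum_sum_mul_right (hsym : A.IsSymm) (h : V → ℝ) :
    ∑ u, ∑ w, A u w * h w = ∑ u, wdeg A u * h u := by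
  rw [Finset.sum_comm, ← sum_sum_mul_left]
  simp only [hsym.apply]

lemma energy_nonneg (hnn : ∀ u v, 0 ≤ A u v) (f : V → ℝ) : 0 ≤ energy A f :=
  Finset.sum_nonneg fun u _ => Finset.sum_nonneg fun w _ => mul_nonneg (hnn u w) (sq_nonneg _)

lemma wnormSq_nonneg (hnn : ∀ u v, 0 ≤ A u v) (f : V → ℝ) : 0 ≤ wnormSq A f :=
  Finset.sum_nonneg fun u _ => mul_nonneg (wdeg_nonneg hnn u) (sq_nonneg _)

lemma energy_eq (hsym : A.IsSymm) (f : V → ℝ) :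
    energy A f = 2 * (wnormSq A f - ∑ u, ∑ w, A u w * (f u * f w)) := by
  calc energy A f
      = ∑ u, ∑ w, (A u w * f u ^ 2 + A u w * f w ^ 2 - 2 * (A u w * (f u * f w))) :=
        Finset.sum_congr rfl fun u _ => Finset.sum_congr rfl fun w _ => by ring
    _ = _ := by
      simp only [Finset.sum_add_distrib, Finset.sum_sub_distrib, ← Finset.mul_sum,
        sum_sum_mul_left, sum_sum_mul_right hsym, wnormSq]
      ring

end Weights

section QuadraticForm

lemma normLap_mulVec_apply [DecidableEq V] (x : V → ℝ) (u : V) :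
    (normLap A *ᵥ x) u =
      x u - 1 / Real.sqrt (wdeg A u) * ∑ w, A u w * (1 / Real.sqrt (wdeg A w) * x w) := by
  rw [normLap, sub_mulVec, one_mulVec, ← mulVec_mulVec, ← mulVec_mulVec, Pi.sub_apply,
    mulVec_diagonal]
  simp only [mulVec, dotProduct, diagonal_apply, ite_mul, zero_mul, Finset.sum_ite_eq,
    Finset.mem_univ, if_true]

lemma dotProduct_normLap_mulVec [DecidableEq V] (hsym : A.IsSymm) (hdeg : ∀ u, 0 < wdeg A u)
    (f : V → ℝ) :
    (fun u => f u * Real.sqrt (wdeg A u)) ⬝ᵥ (normLap A *ᵥ fun u => f u * Real.sqrt (wdeg A u)) =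
      energy A f / 2 := by
  have hs : ∀ u, Real.sqrt (wdeg A u) ≠ 0 := fun u => (Real.sqrt_pos.2 (hdeg u)).ne'
  have hinner : ∀ u, ∑ w, A u w * (1 / Real.sqrt (wdeg A w) * (f w * Real.sqrt (wdeg A w))) =
      ∑ w, A u w * f w := fun u =>
    Finset.sum_congr rfl fun w _ => by field_simp [hs w]
  rw [energy_eq hsym, mul_div_cancel_left₀ _ two_ne_zero, wnormSq, ← Finset.sum_sub_distrib,
    dotProduct]
  refine Finset.sum_congr rfl fun u _ => ?_
  have hrow : ∑ w, A u w * (f u * f w) = f u * ∑ w, A u w * f w := by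
    rw [Finset.mul_sum]; exact Finset.sum_congr rfl fun w _ => by ring
  rw [normLap_mulVec_apply, hinner, hrow]
  linear_combination f u ^ 2 * Real.sq_sqrt (hdeg u).le -
    f u * (∑ w, A u w * f w) * mul_one_div_cancel (hs u)

lemma dotProduct_self_mul_sqrt (hdeg : ∀ u, 0 < wdeg A u) (f : V → ℝ) :
    (fun u => f u * Real.sqrt (wdeg A u)) ⬝ᵥ (fun u => f u * Real.sqrt (wdeg A u)) =
      wnormSq A f :=
  Finset.sum_congr rfl fun u _ => by
    linear_combination f u ^ 2 * Real.sq_sqrt (hdeg u).le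

lemma dotProduct_normLap_mulVec_nonneg [DecidableEq V] (hsym : A.IsSymm)
    (hnn : ∀ u v, 0 ≤ A u v) (hdeg : ∀ u, 0 < wdeg A u) (y : V → ℝ) :
    0 ≤ y ⬝ᵥ (normLap A *ᵥ y) := by
  have hy : (fun u => y u / Real.sqrt (wdeg A u) * Real.sqrt (wdeg A u)) = y :=
    funext fun u => div_mul_cancel₀ _ (Real.sqrt_pos.2 (hdeg u)).ne'
  rw [← hy, dotProduct_normLap_mulVec hsym hdeg]
  exact div_nonneg (energy_nonneg hnn _) zero_le_two

end QuadraticForm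

section Spectral

variable [DecidableEq V] {ι : Type*} [Fintype ι] [DecidableEq ι] {v : ι → V → ℝ}
  {M : Matrix V V ℝ} {μ : ι → ℝ}

lemma sum_dotProduct_smul_eq_self (hcard : Fintype.card ι = Fintype.card V)
    (horth : ∀ i j, v i ⬝ᵥ v j = if i = j then 1 else 0) (y : V → ℝ) :
    ∑ i, (v i ⬝ᵥ y) • v i = y := by
  have hB : Matrix.of v * (Matrix.of v)ᵀ = 1 := by
    ext i j
    simpa [Matrix.mul_apply, Matrix.one_apply, dotProduct] using horth i j
  have hBt : (Matrix.of v)ᵀ * Matrix.of v = 1 := (mul_eq_one_comm_of_card_eq _ _ _ hcard).mp hB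
  calc ∑ i, (v i ⬝ᵥ y) • v i = ((Matrix.of v)ᵀ * Matrix.of v) *ᵥ y := by
        rw [← mulVec_mulVec, mulVec_transpose]
        ext u
        simp only [Finset.sum_apply, Pi.smul_apply, smul_eq_mul, vecMul, mulVec, dotProduct,
          of_apply]
    _ = y := by rw [hBt, one_mulVec]

lemma dotProduct_mulVec_sub_mul_dotProduct_self (hcard : Fintype.card ι = Fintype.card V)
    (horth : ∀ i j, v i ⬝ᵥ v j = if i = j then 1 else 0)
    (heig : ∀ i, M *ᵥ v i = μ i • v i) (m : ℝ) (y : V → ℝ) :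
    y ⬝ᵥ (M *ᵥ y) - m * (y ⬝ᵥ y) = ∑ i, (μ i - m) * (v i ⬝ᵥ y) ^ 2 := by
  have hy := sum_dotProduct_smul_eq_self hcard horth y
  have hdot : ∀ a : ι → ℝ, y ⬝ᵥ ∑ i, a i • v i = ∑ i, a i * (v i ⬝ᵥ y) := fun a => by
    simp only [dotProduct_comm y, sum_dotProduct, smul_dotProduct, smul_eq_mul]
  have hyy := hdot fun i => v i ⬝ᵥ y
  rw [hy] at hyy
  have hMy : M *ᵥ y = ∑ i, (μ i * (v i ⬝ᵥ y)) • v i := by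
    conv_lhs => rw [← hy]
    simp only [mulVec_sum, mulVec_smul, heig, smul_smul, mul_comm]
  rw [hMy, hdot, hyy, Finset.mul_sum, ← Finset.sum_sub_distrib]
  exact Finset.sum_congr rfl fun i _ => by ring

lemma mul_dotProduct_self_le_dotProduct_mulVec (hcard : Fintype.card ι = Fintype.card V)
    (horth : ∀ i j, v i ⬝ᵥ v j = if i = j then 1 else 0)
    (heig : ∀ i, M *ᵥ v i = μ i • v i) {m : ℝ} {y : V → ℝ}
    (hy : ∀ i, μ i < m → v i ⬝ᵥ y = 0) : m * (y ⬝ᵥ y) ≤ y ⬝ᵥ (M *ᵥ y) := by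
  rw [← sub_nonneg, dotProduct_mulVec_sub_mul_dotProduct_self hcard horth heig]
  refine Finset.sum_nonneg fun i _ => ?_
  rcases lt_or_ge (μ i) m with hi | hi
  · simp [hy i hi]
  · exact mul_nonneg (sub_nonneg.2 hi) (sq_nonneg _)

end Spectral

lemma exists_smul_add_smul_dotProduct_eq_zero (w x₁ x₂ : V → ℝ) :
    ∃ a b : ℝ, (a ≠ 0 ∨ b ≠ 0) ∧ w ⬝ᵥ (a • x₁ + b • x₂) = 0 := by
  simp only [dotProduct_add, dotProduct_smul, smul_eq_mul]
  by_cases h : w ⬝ᵥ x₁ = 0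
  · exact ⟨1, 0, Or.inl one_ne_zero, by simp [h]⟩
  · exact ⟨w ⬝ᵥ x₂, -(w ⬝ᵥ x₁), Or.inr (neg_ne_zero.2 h), by ring⟩

section LowerBound

variable [DecidableEq V]

lemma energy_piecewise (hsym : A.IsSymm) (S : Finset V) (a b : ℝ) :
    energy A (fun u => if u ∈ S then a else b) = 2 * (a - b) ^ 2 * cutW A S := by
  have hin : ∀ u ∈ S, ∑ w, A u w * ((if u ∈ S then a else b) - if w ∈ S then a else b) ^ 2 =
      (a - b) ^ 2 * ∑ w ∈ Sᶜ, A u w := fun u hu => by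
    rw [← Finset.sum_add_sum_compl S, Finset.mul_sum,
      Finset.sum_eq_zero fun w hw => by simp [hu, hw], zero_add]
    exact Finset.sum_congr rfl fun w hw => by simp [hu, Finset.mem_compl.1 hw]; ring
  have hout : ∀ u ∈ Sᶜ, ∑ w, A u w * ((if u ∈ S then a else b) - if w ∈ S then a else b) ^ 2 =
      (a - b) ^ 2 * ∑ w ∈ S, A u w := fun u hu => by
    rw [← Finset.sum_add_sum_compl S, Finset.mul_sum, Finset.sum_eq_zero (s := Sᶜ) fun w hw => by
      simp [Finset.mem_compl.1 hu, Finset.mem_compl.1 hw], add_zero]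
    exact Finset.sum_congr rfl fun w hw => by simp [Finset.mem_compl.1 hu, hw]; ring
  have hcompl : ∑ u ∈ Sᶜ, ∑ w ∈ S, A u w = cutW A S := by
    rw [← cutW_compl hsym, cutW, compl_compl]
  rw [energy, ← Finset.sum_add_sum_compl S, Finset.sum_congr rfl hin, Finset.sum_congr rfl hout,
    ← Finset.mul_sum, ← Finset.mul_sum, hcompl, ← cutW]
  ring

lemma wnormSq_piecewise (S : Finset V) (a b : ℝ) :
    wnormSq A (fun u => if u ∈ S then a else b) = a ^ 2 * volW A S + b ^ 2 * volW A Sᶜ := by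
  rw [wnormSq, ← Finset.sum_add_sum_compl S, volW, volW, Finset.mul_sum, Finset.mul_sum]
  congr 1 <;> refine Finset.sum_congr rfl fun u hu => ?_
  · simp [hu, mul_comm]
  · simp [Finset.mem_compl.1 hu, mul_comm]

lemma half_le_cutW_div (hsym : A.IsSymm) (hnn : ∀ u v, 0 ≤ A u v) (hdeg : ∀ u, 0 < wdeg A u)
    {w : V → ℝ} {m : ℝ} (hm : ∀ y, w ⬝ᵥ y = 0 → m * (y ⬝ᵥ y) ≤ y ⬝ᵥ (normLap A *ᵥ y))
    {S : Finset V} (hS : S.Nonempty) (hSu : S ≠ Finset.univ) :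
    m / 2 ≤ cutW A S / min (volW A S) (volW A Sᶜ) := by
  have hSc : Sᶜ.Nonempty :=
    Finset.nonempty_iff_ne_empty.2 ((Finset.compl_eq_empty_iff S).not.2 hSu)
  have hmin : 0 < min (volW A S) (volW A Sᶜ) := lt_min (volW_pos hdeg hS) (volW_pos hdeg hSc)
  rcases le_or_gt m 0 with hm0 | hm0
  · exact (div_nonpos_of_nonpos_of_nonneg hm0 zero_le_two).trans
      (div_nonneg (cutW_nonneg hnn S) hmin.le)
  let part : Finset V → V → ℝ := fun T u => if u ∈ T then Real.sqrt (wdeg A u) else 0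
  obtain ⟨a, b, hab, hw⟩ := exists_smul_add_smul_dotProduct_eq_zero w (part S) (part Sᶜ)
  have hy : a • part S + b • part Sᶜ =
      fun u => (if u ∈ S then a else b) * Real.sqrt (wdeg A u) := by
    ext u; by_cases hu : u ∈ S <;> simp [part, hu]
  have key := hm _ hw
  rw [hy, dotProduct_self_mul_sqrt hdeg, dotProduct_normLap_mulVec hsym hdeg,
    energy_piecewise hsym, wnormSq_piecewise] at key
  have hab2 : 0 < a ^ 2 + b ^ 2 := by
    rcases hab with h | h <;> positivity
  have hvol : (a ^ 2 + b ^ 2) * min (volW A S) (volW A Sᶜ) ≤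
      a ^ 2 * volW A S + b ^ 2 * volW A Sᶜ := by
    nlinarith [min_le_left (volW A S) (volW A Sᶜ), min_le_right (volW A S) (volW A Sᶜ),
      sq_nonneg a, sq_nonneg b]
  rw [div_le_div_iff₀ two_pos hmin]
  refine le_of_mul_le_mul_right ?_ hab2
  calc m * min (volW A S) (volW A Sᶜ) * (a ^ 2 + b ^ 2)
      = m * ((a ^ 2 + b ^ 2) * min (volW A S) (volW A Sᶜ)) := by ring
    _ ≤ m * (a ^ 2 * volW A S + b ^ 2 * volW A Sᶜ) := mul_le_mul_of_nonneg_left hvol hm0.le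
    _ ≤ 2 * (a - b) ^ 2 * cutW A S / 2 := key
    _ ≤ cutW A S * 2 * (a ^ 2 + b ^ 2) := by nlinarith [cutW_nonneg hnn S, sq_nonneg (a + b)]

lemma half_le_conductance [Nontrivial V] (hsym : A.IsSymm) (hnn : ∀ u v, 0 ≤ A u v)
    (hdeg : ∀ u, 0 < wdeg A u) {w : V → ℝ} {m : ℝ}
    (hm : ∀ y, w ⬝ᵥ y = 0 → m * (y ⬝ᵥ y) ≤ y ⬝ᵥ (normLap A *ᵥ y)) :
    m / 2 ≤ conductance A := by
  obtain ⟨a⟩ := (inferInstance : Nonempty V)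
  refine le_csInf ⟨_, {a}, Finset.singleton_nonempty a, Finset.singleton_ne_univ a, rfl⟩ ?_
  rintro r ⟨S, hS, hSu, rfl⟩
  exact half_le_cutW_div hsym hnn hdeg hm hS hSu

lemma half_le_conductance_of_eigen [Nontrivial V] {ι : Type*} [Fintype ι] [DecidableEq ι]
    {v : ι → V → ℝ} {μ : ι → ℝ} (hsym : A.IsSymm) (hnn : ∀ u v, 0 ≤ A u v)
    (hdeg : ∀ u, 0 < wdeg A u) (hcard : Fintype.card ι = Fintype.card V)
    (horth : ∀ i j, v i ⬝ᵥ v j = if i = j then 1 else 0)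
    (heig : ∀ i, normLap A *ᵥ v i = μ i • v i) {i₀ : ι} {m : ℝ} (hm : ∀ i ≠ i₀, m ≤ μ i) :
    m / 2 ≤ conductance A :=
  half_le_conductance hsym hnn hdeg (w := v i₀) fun y hy =>
    mul_dotProduct_self_le_dotProduct_mulVec hcard horth heig fun i hi => by
      obtain rfl : i = i₀ := by_contra fun h => (hm i h).not_gt hi
      exact hy

end LowerBound

section PositiveAndNegativeParts

lemma sq_posPart_add_sq_negPart (x : ℝ) : x⁺ ^ 2 + x⁻ ^ 2 = x ^ 2 := by
  rcases le_total 0 x with hx | hx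
  · rw [posPart_eq_self.2 hx, negPart_eq_zero.2 hx]; ring
  · rw [posPart_eq_zero.2 hx, negPart_eq_neg.2 hx]; ring

lemma sq_posPart_sub_add_sq_negPart_sub_le (x y : ℝ) :
    (x⁺ - y⁺) ^ 2 + (x⁻ - y⁻) ^ 2 ≤ (x - y) ^ 2 := by
  rcases le_total 0 x with hx | hx <;> rcases le_total 0 y with hy | hy
  · rw [posPart_eq_self.2 hx, posPart_eq_self.2 hy, negPart_eq_zero.2 hx, negPart_eq_zero.2 hy]
    nlinarith
  · rw [posPart_eq_self.2 hx, posPart_eq_zero.2 hy, negPart_eq_zero.2 hx, negPart_eq_neg.2 hy]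
    nlinarith
  · rw [posPart_eq_zero.2 hx, posPart_eq_self.2 hy, negPart_eq_neg.2 hx, negPart_eq_zero.2 hy]
    nlinarith
  · rw [posPart_eq_zero.2 hx, posPart_eq_zero.2 hy, negPart_eq_neg.2 hx, negPart_eq_neg.2 hy]
    nlinarith

lemma energy_posPart_add_energy_negPart_le (hnn : ∀ u v, 0 ≤ A u v) (f : V → ℝ) :
    energy A f⁺ + energy A f⁻ ≤ energy A f := by
  simp only [energy, ← Finset.sum_add_distrib, ← mul_add, Pi.posPart_apply, Pi.negPart_apply]
  exact Finset.sum_le_sum fun u _ => Finset.sum_le_sum fun w _ =>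
    mul_le_mul_of_nonneg_left (sq_posPart_sub_add_sq_negPart_sub_le _ _) (hnn u w)

lemma wnormSq_posPart_add_wnormSq_negPart (f : V → ℝ) :
    wnormSq A f⁺ + wnormSq A f⁻ = wnormSq A f := by
  simp only [wnormSq, ← Finset.sum_add_distrib, ← mul_add, Pi.posPart_apply, Pi.negPart_apply,
    sq_posPart_add_sq_negPart]

lemma energy_sub_const (f : V → ℝ) (c : ℝ) : energy A (fun u => f u - c) = energy A f := by
  simp only [energy, sub_sub_sub_cancel_right]

lemma wnormSq_sub_const {f : V → ℝ} (hf : ∑ u, wdeg A u * f u = 0) (c : ℝ) :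
    wnormSq A (fun u => f u - c) = wnormSq A f + c ^ 2 * volW A Finset.univ := by
  have h : ∀ u, wdeg A u * (f u - c) ^ 2 =
      wdeg A u * f u ^ 2 - 2 * c * (wdeg A u * f u) + c ^ 2 * wdeg A u := fun u => by ring
  simp only [wnormSq, volW, h, Finset.sum_add_distrib, Finset.sum_sub_distrib, ← Finset.mul_sum,
    hf, mul_zero, sub_zero]

end PositiveAndNegativeParts

lemma exists_volW_median (hnn : ∀ u v, 0 ≤ A u v) (f : V → ℝ) :
    ∃ c : ℝ, volW A (Finset.univ.filter (c < f ·)) ≤ volW A Finset.univ / 2 ∧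
      volW A (Finset.univ.filter (f · < c)) ≤ volW A Finset.univ / 2 := by
  have hsplit : ∀ c, volW A (Finset.univ.filter (c < f ·)) =
      volW A Finset.univ - volW A (Finset.univ.filter (f · ≤ c)) := fun c => by
    rw [volW, volW, volW, ← Finset.sum_filter_add_sum_filter_not Finset.univ (f · ≤ c)]
    simp only [not_le]; ring
  have hvol := volW_nonneg hnn (Finset.univ : Finset V)
  rcases isEmpty_or_nonempty V with hV | hV
  · exact ⟨0, by simp [Finset.univ_eq_empty, volW]⟩
  let good := Finset.univ.filter fun u =>
    volW A Finset.univ / 2 ≤ volW A (Finset.univ.filter (f · ≤ f u))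
  obtain ⟨top, -, htop⟩ := Finset.univ.exists_max_image f Finset.univ_nonempty
  have htop_good : top ∈ good := by
    have : Finset.univ.filter (f · ≤ f top) = Finset.univ :=
      Finset.filter_true_of_mem fun u _ => htop u (Finset.mem_univ u)
    simp only [good, Finset.mem_filter, this, Finset.mem_univ, true_and]
    linarith
  obtain ⟨u₀, hu₀, hmin⟩ := good.exists_min_image f ⟨top, htop_good⟩
  refine ⟨f u₀, ?_, ?_⟩
  · rw [hsplit]
    linarith [(Finset.mem_filter.1 hu₀).2]
  rcases (Finset.univ.filter (f · < f u₀)).eq_empty_or_nonempty with hempty | hne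
  · rw [hempty, volW, Finset.sum_empty]
    linarith
  obtain ⟨u₁, hu₁, hmax⟩ := (Finset.univ.filter (f · < f u₀)).exists_max_image f hne
  have hu₁bad : u₁ ∉ good := fun h => (hmin u₁ h).not_gt (Finset.mem_filter.1 hu₁).2
  simp only [good, Finset.mem_filter, Finset.mem_univ, true_and, not_le] at hu₁bad
  have hsub : Finset.univ.filter (f · < f u₀) ⊆ Finset.univ.filter (f · ≤ f u₁) :=
    fun u hu => Finset.mem_filter.2 ⟨Finset.mem_univ u, hmax u hu⟩
  linarith [volW_mono hnn hsub]

lemma exists_le_mul_of_add_le_mul {a₁ a₂ b₁ b₂ K : ℝ} (ha₁ : 0 ≤ a₁) (ha₂ : 0 ≤ a₂)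
    (hb₁ : 0 ≤ b₁) (hb₂ : 0 ≤ b₂) (hb : 0 < b₁ + b₂) (h : a₁ + a₂ ≤ K * (b₁ + b₂)) :
    (0 < b₁ ∧ a₁ ≤ K * b₁) ∨ (0 < b₂ ∧ a₂ ≤ K * b₂) := by
  rcases hb₁.eq_or_lt with hb₁ | hb₁
  · subst hb₁
    exact Or.inr ⟨by linarith, by linarith⟩
  rcases le_or_gt a₁ (K * b₁) with h₁ | h₁
  · exact Or.inl ⟨hb₁, h₁⟩
  · refine Or.inr ⟨hb₂.lt_of_ne fun h₂ => ?_, by linarith⟩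
    subst h₂
    linarith

lemma exists_nonneg_energy_le (hnn : ∀ u v, 0 ≤ A u v) {f : V → ℝ}
    (hsum : ∑ u, wdeg A u * f u = 0) (hpos : 0 < wnormSq A f) {K : ℝ}
    (hf : energy A f ≤ K * wnormSq A f) :
    ∃ g : V → ℝ, (∀ u, 0 ≤ g u) ∧ 0 < wnormSq A g ∧ energy A g ≤ K * wnormSq A g ∧
      volW A (Finset.univ.filter (0 < g ·)) ≤ volW A Finset.univ / 2 := by
  have hK : 0 ≤ K := nonneg_of_mul_nonneg_left ((energy_nonneg hnn f).trans hf) hpos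
  obtain ⟨c, hgt, hlt⟩ := exists_volW_median hnn f
  set F : V → ℝ := fun u => f u - c
  have hwF : wnormSq A f ≤ wnormSq A F⁺ + wnormSq A F⁻ := by
    rw [wnormSq_posPart_add_wnormSq_negPart, wnormSq_sub_const hsum]
    nlinarith [volW_nonneg hnn Finset.univ]
  have hE : energy A F⁺ + energy A F⁻ ≤ K * (wnormSq A F⁺ + wnormSq A F⁻) :=
    calc energy A F⁺ + energy A F⁻ ≤ energy A f :=
          energy_sub_const (A := A) f c ▸ energy_posPart_add_energy_negPart_le hnn F
      _ ≤ K * wnormSq A f := hf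
      _ ≤ K * (wnormSq A F⁺ + wnormSq A F⁻) := mul_le_mul_of_nonneg_left hwF hK
  rcases exists_le_mul_of_add_le_mul (energy_nonneg hnn _) (energy_nonneg hnn _)
    (wnormSq_nonneg hnn _) (wnormSq_nonneg hnn _) (hpos.trans_le hwF) hE with ⟨h₁, h₂⟩ | ⟨h₁, h₂⟩
  · refine ⟨F⁺, fun u => posPart_nonneg _, h₁, h₂, ?_⟩
    simpa [F, posPart_pos_iff, sub_pos] using hgt
  · refine ⟨F⁻, fun u => negPart_nonneg _, h₁, h₂, ?_⟩
    simpa [F, negPart_pos_iff, sub_neg] using hlt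

section Sweep

lemma crossing_nonneg (hnn : ∀ u v, 0 ≤ A u v) (h : V → ℝ) : 0 ≤ crossing A h :=
  Finset.sum_nonneg fun u _ => Finset.sum_nonneg fun w _ =>
    mul_nonneg (hnn u w) (posPart_nonneg _)

lemma two_mul_crossing (hsym : A.IsSymm) (h : V → ℝ) :
    2 * crossing A h = ∑ u, ∑ w, A u w * |h u - h w| := by
  have hswap : crossing A h = ∑ u, ∑ w, A u w * (h u - h w)⁻ := by
    rw [crossing, Finset.sum_comm]
    exact Finset.sum_congr rfl fun u _ => Finset.sum_congr rfl fun w _ => by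
      rw [hsym.apply u w, ← neg_sub, posPart_neg]
  rw [two_mul]
  nth_rewrite 2 [hswap]
  simp only [crossing, ← Finset.sum_add_distrib, ← mul_add, posPart_add_negPart]

lemma crossing_sq_sq_le (hsym : A.IsSymm) (hnn : ∀ u v, 0 ≤ A u v) {g : V → ℝ}
    (hg : ∀ u, 0 ≤ g u) : crossing A (fun u => g u ^ 2) ^ 2 ≤ energy A g * wnormSq A g := by
  have hCS : (∑ u, ∑ w, A u w * |g u ^ 2 - g w ^ 2|) ^ 2 ≤
      energy A g * ∑ u, ∑ w, A u w * (g u + g w) ^ 2 := by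
    simpa only [Fintype.sum_prod_type, energy] using
      Finset.sum_sq_le_sum_mul_sum_of_sq_le_mul (Finset.univ : Finset (V × V))
        (r := fun p => A p.1 p.2 * |g p.1 ^ 2 - g p.2 ^ 2|)
        (f := fun p => A p.1 p.2 * (g p.1 - g p.2) ^ 2)
        (g := fun p => A p.1 p.2 * (g p.1 + g p.2) ^ 2)
        (fun p _ => mul_nonneg (hnn _ _) (sq_nonneg _))
        (fun p _ => mul_nonneg (hnn _ _) (sq_nonneg _)) fun p _ => by
          rw [sq_sub_sq, abs_mul, abs_of_nonneg (add_nonneg (hg p.1) (hg p.2))]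
          exact le_of_eq (by rw [← sq_abs (g p.1 - g p.2)]; ring)
  have hplus : ∑ u, ∑ w, A u w * (g u + g w) ^ 2 ≤ 4 * wnormSq A g :=
    calc ∑ u, ∑ w, A u w * (g u + g w) ^ 2
        ≤ ∑ u, ∑ w, (2 * (A u w * g u ^ 2) + 2 * (A u w * g w ^ 2)) :=
          Finset.sum_le_sum fun u _ => Finset.sum_le_sum fun w _ => by
            nlinarith [mul_nonneg (hnn u w) (sq_nonneg (g u - g w))]
      _ = 4 * wnormSq A g := by
          simp only [Finset.sum_add_distrib, ← Finset.mul_sum, sum_sum_mul_left,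
            sum_sum_mul_right hsym, wnormSq]
          ring
  rw [← two_mul_crossing hsym] at hCS
  linarith [mul_le_mul_of_nonneg_left hplus (energy_nonneg hnn g)]

lemma sum_wdeg_mul_eq_layer {h : V → ℝ} {m : ℝ} (hm : 0 < m) (hlev : ∀ u, h u = 0 ∨ m ≤ h u) :
    ∑ u, wdeg A u * h u =
      m * volW A (Finset.univ.filter (0 < h ·)) + ∑ u, wdeg A u * (h u - m)⁺ := by
  rw [volW, Finset.sum_filter, Finset.mul_sum, ← Finset.sum_add_distrib]
  refine Finset.sum_congr rfl fun u _ => ?_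
  rcases hlev u with hu | hu
  · simp [hu, posPart_eq_zero.2 (neg_nonpos.2 hm.le)]
  · rw [if_pos (hm.trans_le hu), posPart_eq_self.2 (sub_nonneg.2 hu)]
    ring

variable [DecidableEq V]

lemma crossing_eq_layer {h : V → ℝ} {m : ℝ} (hm : 0 < m) (hlev : ∀ u, h u = 0 ∨ m ≤ h u) :
    crossing A h =
      m * cutW A (Finset.univ.filter (0 < h ·)) + crossing A (fun u => (h u - m)⁺) := by
  rw [cutW, Finset.compl_filter, Finset.sum_filter, Finset.mul_sum, crossing, crossing,
    ← Finset.sum_add_distrib]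
  have hneg : (-m)⁺ = 0 := posPart_eq_zero.2 (neg_nonpos.2 hm.le)
  have h0 : ∀ w, 0 ≤ h w := fun w => (hlev w).elim (·.ge) hm.le.trans
  refine Finset.sum_congr rfl fun u _ => ?_
  rcases hlev u with hu | hu
  · rw [hu, if_neg (lt_irrefl 0), mul_zero, zero_add, zero_sub, hneg]
    refine Finset.sum_congr rfl fun w _ => ?_
    rw [zero_sub, zero_sub, posPart_eq_zero.2 (neg_nonpos.2 (h0 w)),
      posPart_eq_zero.2 (neg_nonpos.2 (posPart_nonneg _))]
  rw [if_pos (hm.trans_le hu), Finset.sum_filter, Finset.mul_sum, ← Finset.sum_add_distrib]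
  refine Finset.sum_congr rfl fun w _ => ?_
  rw [posPart_eq_self.2 (sub_nonneg.2 hu)]
  rcases hlev w with hw | hw
  · rw [hw, if_pos (lt_irrefl 0), sub_zero, zero_sub, hneg, sub_zero,
      posPart_eq_self.2 (hm.le.trans hu), posPart_eq_self.2 (sub_nonneg.2 hu)]
    ring
  · rw [if_neg (not_not.2 (hm.trans_le hw)), posPart_eq_self.2 (sub_nonneg.2 hw),
      sub_sub_sub_cancel_right]
    ring

/- Write `h = m 𝟙_S + (h - m)⁺` with `S` the support of `h` and `m` its least positive value.
Both sides of the hypothesis split accordingly, so if `S` is not the required cut then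
`(h - m)⁺`, whose support misses a point of `S`, satisfies the hypothesis again. -/
lemma exists_cutW_le_of_crossing_le (hnn : ∀ u v, 0 ≤ A u v) {K : ℝ} (h : V → ℝ)
    (h0 : ∀ u, 0 ≤ h u) (hpos : 0 < ∑ u, wdeg A u * h u)
    (hcross : crossing A h ≤ K * ∑ u, wdeg A u * h u) :
    ∃ S : Finset V, S.Nonempty ∧ (∀ u ∈ S, 0 < h u) ∧ cutW A S ≤ K * volW A S := by
  set S := Finset.univ.filter (0 < h ·)
  have hS : S.Nonempty := by
    have hpos₀ : ∑ u : V, (0 : ℝ) < ∑ u, wdeg A u * h u := by simpa using hpos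
    obtain ⟨u, -, hu⟩ := Finset.exists_lt_of_sum_lt hpos₀
    exact ⟨u, Finset.mem_filter.2 ⟨Finset.mem_univ u, pos_of_mul_pos_right hu (wdeg_nonneg hnn u)⟩⟩
  obtain ⟨u₀, hu₀S, hu₀⟩ := Finset.exists_mem_eq_inf' hS h
  set m := S.inf' hS h
  have hm : 0 < m := (Finset.lt_inf'_iff hS).2 fun u hu => (Finset.mem_filter.1 hu).2
  have hlev : ∀ u, h u = 0 ∨ m ≤ h u := fun u => (h0 u).eq_or_lt.imp Eq.symm fun hu =>
    Finset.inf'_le h (Finset.mem_filter.2 ⟨Finset.mem_univ u, hu⟩)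
  by_cases hcut : cutW A S ≤ K * volW A S
  · exact ⟨S, hS, fun u hu => (Finset.mem_filter.1 hu).2, hcut⟩
  rw [crossing_eq_layer hm hlev, sum_wdeg_mul_eq_layer hm hlev] at hcross
  have hcross' : crossing A (fun u => (h u - m)⁺) < K * ∑ u, wdeg A u * (h u - m)⁺ := by
    nlinarith [mul_lt_mul_of_pos_left (not_le.1 hcut) hm]
  have hpos' : 0 < ∑ u, wdeg A u * (h u - m)⁺ := by
    refine (Finset.sum_nonneg fun u _ =>
      mul_nonneg (wdeg_nonneg hnn u) (posPart_nonneg _)).lt_of_ne fun h' => ?_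
    rw [← h', mul_zero] at hcross'
    exact (crossing_nonneg hnn _).not_gt hcross'
  obtain ⟨T, hT, hTpos, hTcut⟩ := exists_cutW_le_of_crossing_le hnn (fun u => (h u - m)⁺)
    (fun u => posPart_nonneg _) hpos' hcross'.le
  exact ⟨T, hT, fun u hu => hm.trans (sub_pos.1 (posPart_pos_iff.1 (hTpos u hu))), hTcut⟩
termination_by (Finset.univ.filter (0 < h ·)).card
decreasing_by
  refine Finset.card_lt_card ((Finset.ssubset_iff_of_subset fun u hu => ?_).2 ⟨u₀, hu₀S, ?_⟩)
  · simp only [Finset.mem_filter, Finset.mem_univ, true_and, posPart_pos_iff, sub_pos] at hu ⊢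
    exact hm.trans hu
  · simp only [Finset.mem_filter, Finset.mem_univ, true_and, posPart_pos_iff, sub_pos, not_lt]
    exact hu₀.ge

end Sweep

section UpperBound

variable [DecidableEq V]

lemma exists_cutW_le_of_energy_le (hsym : A.IsSymm) (hnn : ∀ u v, 0 ≤ A u v) {f : V → ℝ}
    (hsum : ∑ u, wdeg A u * f u = 0) (hpos : 0 < wnormSq A f) {K : ℝ} (hK : 0 ≤ K)
    (hf : energy A f ≤ K ^ 2 * wnormSq A f) :
    ∃ S : Finset V, S.Nonempty ∧ volW A S ≤ volW A Finset.univ / 2 ∧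
      cutW A S ≤ K * volW A S := by
  obtain ⟨g, hg0, hgpos, hgE, hgvol⟩ := exists_nonneg_energy_le hnn hsum hpos hf
  have hcross : crossing A (fun u => g u ^ 2) ≤ K * wnormSq A g := by
    refine (pow_le_pow_iff_left₀ (crossing_nonneg hnn _) (mul_nonneg hK (wnormSq_nonneg hnn g))
      two_ne_zero).1 ?_
    calc crossing A (fun u => g u ^ 2) ^ 2 ≤ energy A g * wnormSq A g :=
          crossing_sq_sq_le hsym hnn hg0
      _ ≤ K ^ 2 * wnormSq A g * wnormSq A g :=
          mul_le_mul_of_nonneg_right hgE (wnormSq_nonneg hnn g)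
      _ = (K * wnormSq A g) ^ 2 := by ring
  obtain ⟨S, hS, hSpos, hScut⟩ :=
    exists_cutW_le_of_crossing_le hnn _ (fun u => sq_nonneg (g u)) hgpos hcross
  refine ⟨S, hS, (volW_mono hnn fun u hu => ?_).trans hgvol, hScut⟩
  exact Finset.mem_filter.2 ⟨Finset.mem_univ u, (hg0 u).lt_of_ne fun h0 => by
    simpa [← h0] using hSpos u hu⟩

lemma conductance_le_of_cutW_le (hnn : ∀ u v, 0 ≤ A u v) (hdeg : ∀ u, 0 < wdeg A u)
    {S : Finset V} (hS : S.Nonempty) (hhalf : volW A S ≤ volW A Finset.univ / 2) {K : ℝ}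
    (hcut : cutW A S ≤ K * volW A S) : conductance A ≤ K := by
  have hvol := volW_pos hdeg hS
  have hsplit := volW_add_volW_compl (A := A) S
  have hSu : S ≠ Finset.univ := fun h => by rw [h] at hhalf hvol; linarith
  have hbdd : BddBelow {r | ∃ S : Finset V, S.Nonempty ∧ S ≠ Finset.univ ∧
      r = cutW A S / min (volW A S) (volW A Sᶜ)} := by
    refine ⟨0, ?_⟩
    rintro r ⟨T, -, -, rfl⟩
    exact div_nonneg (cutW_nonneg hnn T) (le_min (volW_nonneg hnn T) (volW_nonneg hnn Tᶜ))
  refine (csInf_le hbdd ⟨S, hS, hSu, rfl⟩).trans ?_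
  rw [min_eq_left (by linarith), div_le_iff₀ hvol]
  exact hcut

lemma conductance_le_of_two_mul_dotProduct_normLap_mulVec_le (hsym : A.IsSymm)
    (hnn : ∀ u v, 0 ≤ A u v) (hdeg : ∀ u, 0 < wdeg A u) {y : V → ℝ} (hy : 0 < y ⬝ᵥ y)
    (hyd : (fun u => Real.sqrt (wdeg A u)) ⬝ᵥ y = 0) {K : ℝ} (hK : 0 ≤ K)
    (hyL : 2 * (y ⬝ᵥ (normLap A *ᵥ y)) ≤ K ^ 2 * (y ⬝ᵥ y)) : conductance A ≤ K := by
  have hs : ∀ u, Real.sqrt (wdeg A u) ≠ 0 := fun u => (Real.sqrt_pos.2 (hdeg u)).ne'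
  set f : V → ℝ := fun u => y u / Real.sqrt (wdeg A u)
  have hfy : (fun u => f u * Real.sqrt (wdeg A u)) = y :=
    funext fun u => div_mul_cancel₀ _ (hs u)
  rw [← hfy, dotProduct_self_mul_sqrt hdeg] at hy hyL
  rw [dotProduct_normLap_mulVec hsym hdeg] at hyL
  have hsum : ∑ u, wdeg A u * f u = 0 := by
    rw [← hyd]
    refine Finset.sum_congr rfl fun u _ => ?_
    nth_rewrite 1 [← Real.mul_self_sqrt (hdeg u).le]
    simp only [f]
    field_simp [hs u]
  obtain ⟨S, hS, hhalf, hcut⟩ := exists_cutW_le_of_energy_le hsym hnn hsum hy hK (by linarith)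
  exact conductance_le_of_cutW_le hnn hdeg hS hhalf hcut

lemma conductance_le_sqrt_of_eigen (hsym : A.IsSymm) (hnn : ∀ u v, 0 ≤ A u v)
    (hdeg : ∀ u, 0 < wdeg A u) {v₀ v₁ : V → ℝ} {μ₀ μ₁ : ℝ} (h₀ : v₀ ⬝ᵥ v₀ = 1)
    (h₁ : v₁ ⬝ᵥ v₁ = 1) (h₀₁ : v₀ ⬝ᵥ v₁ = 0) (he₀ : normLap A *ᵥ v₀ = μ₀ • v₀)
    (he₁ : normLap A *ᵥ v₁ = μ₁ • v₁) (hμ : μ₀ ≤ μ₁) :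
    conductance A ≤ Real.sqrt (2 * μ₁) := by
  obtain ⟨a, b, hab, hy⟩ :=
    exists_smul_add_smul_dotProduct_eq_zero (fun u => Real.sqrt (wdeg A u)) v₀ v₁
  have h₁₀ : v₁ ⬝ᵥ v₀ = 0 := by rwa [dotProduct_comm]
  have hμ₁ : 0 ≤ μ₁ := by
    simpa [he₁, h₁] using dotProduct_normLap_mulVec_nonneg hsym hnn hdeg v₁
  have hyy : (a • v₀ + b • v₁) ⬝ᵥ (a • v₀ + b • v₁) = a ^ 2 + b ^ 2 := by
    simp [add_dotProduct, dotProduct_add, h₀, h₁, h₀₁, h₁₀]; ring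
  have hyL : (a • v₀ + b • v₁) ⬝ᵥ (normLap A *ᵥ (a • v₀ + b • v₁)) = a ^ 2 * μ₀ + b ^ 2 * μ₁ := by
    simp [mulVec_add, mulVec_smul, he₀, he₁, add_dotProduct, dotProduct_add, h₀, h₁, h₀₁, h₁₀]
    ring
  refine conductance_le_of_two_mul_dotProduct_normLap_mulVec_le hsym hnn hdeg
    (by rw [hyy]; rcases hab with h | h <;> positivity) hy (Real.sqrt_nonneg _) ?_
  rw [Real.sq_sqrt (by linarith), hyL, hyy]
  nlinarith [sq_nonneg a]

end UpperBound

end Cheeger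

open Cheeger

/-- Cheeger's inequality: `λ₂/2 ≤ φ ≤ √(2 λ₂)`. -/
theorem stmt12 {n : ℕ} (hn : 2 ≤ n) (A : Matrix (Fin n) (Fin n) ℝ)
    (hsym : A.IsSymm) (hnn : ∀ u v, 0 ≤ A u v)
    (hdeg : ∀ u, 0 < wdeg A u)
    (μ : Fin n → ℝ) (v : Fin n → Fin n → ℝ)
    (hmono : Monotone μ)
    (horth : ∀ i j, v i ⬝ᵥ v j = if i = j then (1 : ℝ) else 0)
    (heig : ∀ i, normLap A *ᵥ v i = μ i • v i) :
    μ ⟨1, by omega⟩ / 2 ≤ conductance A ∧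
      conductance A ≤ Real.sqrt (2 * μ ⟨1, by omega⟩) := by
  have : Nontrivial (Fin n) := Fin.nontrivial_iff_two_le.2 hn
  let i₀ : Fin n := ⟨0, by omega⟩
  let i₁ : Fin n := ⟨1, by omega⟩
  have h₀₁ : i₀ ≠ i₁ := by simp [i₀, i₁, Fin.ext_iff]
  have hi₁ : ∀ i ≠ i₀, i₁ ≤ i := fun i hi => by
    simp only [i₀, i₁, ne_eq, Fin.ext_iff, Fin.le_def] at hi ⊢
    omega
  exact ⟨half_le_conductance_of_eigen hsym hnn hdeg rfl horth heig fun i hi => hmono (hi₁ i hi),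
    conductance_le_sqrt_of_eigen hsym hnn hdeg (by simpa using horth i₀ i₀)
      (by simpa using horth i₁ i₁) (by simpa [h₀₁] using horth i₀ i₁) (heig i₀) (heig i₁)
      (hmono (Fin.mk_le_mk.2 zero_le_one))⟩
end

section
/- Let G = (V,E) be a finite connected unweighted graph with k-way sparsest cut φ_k > 0. Then the diameter of G satisfies D = O(k·log n / φ_k); concretely, there is a universal constant c such that D ≤ c·k·log(n)/φ_k. -/
open Matrix

/-- Number of edges of a simple graph crossing the cut `(S, Sᶜ)`. -/
noncomputable def cutG {V : Type*} [Fintype V] [DecidableEq V]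
    (G : SimpleGraph V) (S : Finset V) : ℝ := by
  classical exact ∑ u ∈ S, ∑ v ∈ Sᶜ, if G.Adj u v then (1 : ℝ) else 0

/-- Volume of a vertex set: the sum of the degrees of its vertices. -/
noncomputable def volG {V : Type*} [Fintype V] [DecidableEq V]
    (G : SimpleGraph V) (S : Finset V) : ℝ := by
  classical exact ∑ u ∈ S, (G.degree u : ℝ)

/-- The `k`-way conductance `φ_k`: the infimum over families of `k` pairwise
disjoint nonempty vertex sets of the maximum conductance of the parts. -/
noncomputable def kwayConductance {V : Type*} [Fintype V] [DecidableEq V]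
    (G : SimpleGraph V) (k : ℕ) : ℝ :=
  sInf {r | ∃ P : Fin k → Finset V, (∀ i, (P i).Nonempty) ∧
    (Pairwise fun i j => Disjoint (P i) (P j)) ∧
    r = ⨆ i : Fin k, cutG G (P i) / volG G (P i)}

set_option linter.unusedSectionVars false
set_option linter.unusedVariables false
set_option maxHeartbeats 1000000

namespace Stmt13Aux

variable {V : Type*} [Fintype V] [DecidableEq V]

lemma getVert_dist_le (G : SimpleGraph V) (hc : G.Connected) {x y : V}
    (p : G.Walk x y) (i : ℕ) : G.dist x (p.getVert i) ≤ i := by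
  induction i with
  | zero => simp [SimpleGraph.Walk.getVert_zero, SimpleGraph.dist_self]
  | succ i ih =>
    by_cases hl : p.length ≤ i
    · rw [p.getVert_of_length_le (le_trans hl (Nat.le_succ i)),
        ← p.getVert_of_length_le hl]
      exact le_trans ih (Nat.le_succ i)
    · have hadj := p.adj_getVert_succ (Nat.lt_of_not_le hl)
      have h1 : G.dist (p.getVert i) (p.getVert (i+1)) = 1 :=
        SimpleGraph.dist_eq_one_iff_adj.mpr hadj
      have := hc.dist_triangle (u := x) (v := p.getVert i) (w := p.getVert (i+1))
      omega

lemma dist_getVert_eq (G : SimpleGraph V) (hc : G.Connected) {x y : V}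
    (p : G.Walk x y) (hp : p.length = G.dist x y) {i : ℕ} (hi : i ≤ p.length) :
    G.dist x (p.getVert i) = i := by
  have h1 : G.dist x (p.getVert i) ≤ i := getVert_dist_le G hc p i
  have h2 : G.dist y (p.getVert i) ≤ p.length - i := by
    have hrev : p.reverse.getVert (p.length - i) = p.getVert i := by
      rw [SimpleGraph.Walk.getVert_reverse, Nat.sub_sub_self hi]
    rw [← hrev]
    exact getVert_dist_le G hc p.reverse (p.length - i)
  have h3 : G.dist x y ≤ G.dist x (p.getVert i) + G.dist (p.getVert i) y :=
    hc.dist_triangle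
  rw [SimpleGraph.dist_comm (u := y)] at h2
  omega

/-- The ball of radius `r` around `x` as a `Finset`. -/
noncomputable def ball (G : SimpleGraph V) (x : V) (r : ℕ) : Finset V :=
  Finset.univ.filter (fun v => G.dist x v ≤ r)

lemma mem_ball {G : SimpleGraph V} {x v : V} {r : ℕ} :
    v ∈ ball G x r ↔ G.dist x v ≤ r := by simp [ball]

lemma self_mem_ball {G : SimpleGraph V} {x : V} {r : ℕ} : x ∈ ball G x r :=
  mem_ball.mpr (by simp [SimpleGraph.dist_self])

lemma ball_mono {G : SimpleGraph V} {x : V} {r r' : ℕ} (h : r ≤ r') :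
    ball G x r ⊆ ball G x r' := fun v hv => mem_ball.mpr (le_trans (mem_ball.mp hv) h)

lemma degree_pos (G : SimpleGraph V) [DecidableRel G.Adj] (hc : G.Connected)
    (hn : 1 < Fintype.card V) (v : V) : 0 < G.degree v := by
  rw [SimpleGraph.degree_pos_iff_exists_adj]
  obtain ⟨w, hw⟩ := Fintype.exists_ne_of_one_lt_card hn v
  have hr : G.Reachable v w := (hc v w)
  obtain ⟨p, hp⟩ := hr.exists_walk_length_eq_dist
  have hd : 0 < G.dist v w := hr.pos_dist_of_ne (Ne.symm hw)
  have := p.adj_getVert_succ (i := 0) (by omega)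
  rw [p.getVert_zero] at this
  exact ⟨_, this⟩

lemma cut_nonneg (G : SimpleGraph V) (S : Finset V) : 0 ≤ cutG G S := by
  classical
  unfold cutG
  refine Finset.sum_nonneg fun u _ => Finset.sum_nonneg fun v _ => ?_
  split <;> norm_num

lemma vol_nonneg (G : SimpleGraph V) (S : Finset V) : 0 ≤ volG G S := by
  classical
  exact Finset.sum_nonneg fun u _ => by positivity

lemma card_le_vol (G : SimpleGraph V) (hc : G.Connected) (hn : 1 < Fintype.card V)
    (S : Finset V) : (S.card : ℝ) ≤ volG G S := by
  classical
  unfold volG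
  calc (S.card : ℝ) = ∑ _u ∈ S, (1:ℝ) := by simp
    _ ≤ ∑ u ∈ S, (G.degree u : ℝ) := by
        refine Finset.sum_le_sum fun u _ => ?_
        exact_mod_cast degree_pos G hc hn u

lemma vol_pos (G : SimpleGraph V) (hc : G.Connected) (hn : 1 < Fintype.card V)
    {S : Finset V} (hS : S.Nonempty) : 0 < volG G S := by
  classical
  unfold volG
  refine Finset.sum_pos (fun u _ => ?_) hS
  exact_mod_cast degree_pos G hc hn u

lemma vol_le_sq (G : SimpleGraph V) (S : Finset V) :
    volG G S ≤ (Fintype.card V : ℝ) ^ 2 := by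
  classical
  unfold volG
  calc ∑ u ∈ S, (G.degree u : ℝ) ≤ ∑ u ∈ S, (Fintype.card V : ℝ) := by
        refine Finset.sum_le_sum fun u _ => ?_
        exact_mod_cast (G.degree_lt_card_verts u).le
    _ = S.card * Fintype.card V := by rw [Finset.sum_const, nsmul_eq_mul]
    _ ≤ (Fintype.card V : ℝ) * Fintype.card V := by
        have := S.card_le_univ
        have h : (S.card : ℝ) ≤ Fintype.card V := by exact_mod_cast by simpa using this
        exact mul_le_mul_of_nonneg_right h (Nat.cast_nonneg _)
    _ = (Fintype.card V : ℝ) ^ 2 := by ring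

end Stmt13Aux

namespace Stmt13Aux
variable {V : Type*} [Fintype V] [DecidableEq V]

lemma cut_le_vol_diff (G : SimpleGraph V) (hc : G.Connected) (x : V) (j : ℕ) :
    cutG G (ball G x j) + volG G (ball G x j) ≤ volG G (ball G x (j+1)) := by
  classical
  have hsub : ball G x j ⊆ ball G x (j+1) := ball_mono (Nat.le_succ j)
  unfold cutG volG
  rw [Finset.sum_comm]
  have key : ∀ v ∈ (ball G x j)ᶜ,
      (∑ u ∈ ball G x j, if G.Adj u v then (1:ℝ) else 0) ≤
        (if v ∈ ball G x (j+1) then (G.degree v : ℝ) else 0) := by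
    intro v hv
    by_cases hmem : v ∈ ball G x (j+1)
    · rw [if_pos hmem]
      have hcard : ((ball G x j).filter (fun u => G.Adj u v)).card ≤ G.degree v := by
        have hsub2 : (ball G x j).filter (fun u => G.Adj u v) ⊆ G.neighborFinset v := by
          intro u hu
          rw [SimpleGraph.mem_neighborFinset]
          exact (Finset.mem_filter.mp hu).2.symm
        exact Finset.card_le_card hsub2
      calc ∑ u ∈ ball G x j, (if G.Adj u v then (1:ℝ) else 0)
          = ((ball G x j).filter (fun u => G.Adj u v)).card := by
            rw [Finset.sum_boole]
        _ ≤ (G.degree v : ℝ) := by exact_mod_cast hcard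
    · rw [if_neg hmem]
      refine le_of_eq (Finset.sum_eq_zero fun u hu => ?_)
      rw [if_neg]
      intro hadj
      have h1 : G.dist v u = 1 := SimpleGraph.dist_eq_one_iff_adj.mpr hadj.symm
      have h2 : G.dist x v ≤ G.dist x u + G.dist u v := hc.dist_triangle
      rw [SimpleGraph.dist_comm (u := v)] at h1
      have h3 : G.dist x u ≤ j := mem_ball.mp hu
      exact hmem (mem_ball.mpr (by omega))
  calc ∑ v ∈ (ball G x j)ᶜ, (∑ u ∈ ball G x j, if G.Adj u v then (1:ℝ) else 0)
        + ∑ u ∈ ball G x j, (G.degree u : ℝ)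
      ≤ ∑ v ∈ (ball G x j)ᶜ, (if v ∈ ball G x (j+1) then (G.degree v : ℝ) else 0)
        + ∑ u ∈ ball G x j, (G.degree u : ℝ) := by
        have := Finset.sum_le_sum key
        linarith
    _ = ∑ v ∈ ball G x (j+1) \ ball G x j, (G.degree v : ℝ)
        + ∑ u ∈ ball G x j, (G.degree u : ℝ) := by
        congr 1
        rw [Finset.sum_ite_mem]
        congr 1
        ext a
        simp only [Finset.mem_inter, Finset.mem_compl, Finset.mem_sdiff]
        tauto
    _ = ∑ u ∈ ball G x (j+1), (G.degree u : ℝ) := Finset.sum_sdiff hsub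

lemma vol_ball_growth (G : SimpleGraph V) (hc : G.Connected) (x : V) {φ : ℝ}
    (hφ0 : 0 ≤ φ) (r : ℕ)
    (h : ∀ j < r, φ * volG G (ball G x j) ≤ cutG G (ball G x j)) :
    (1+φ)^r * volG G (ball G x 0) ≤ volG G (ball G x r) := by
  induction r with
  | zero => simp
  | succ r ih =>
    have ihr := ih (fun j hj => h j (hj.trans (Nat.lt_succ_self r)))
    have hstep := cut_le_vol_diff G hc x r
    have hcut := h r (Nat.lt_succ_self r)
    have hpownn : (0:ℝ) ≤ (1+φ)^r := pow_nonneg (by linarith) r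
    have hvol0 : 0 ≤ volG G (ball G x 0) := vol_nonneg _ _
    calc (1+φ)^(r+1) * volG G (ball G x 0)
        = (1+φ) * ((1+φ)^r * volG G (ball G x 0)) := by ring
      _ ≤ (1+φ) * volG G (ball G x r) :=
          mul_le_mul_of_nonneg_left ihr (by linarith)
      _ = volG G (ball G x r) + φ * volG G (ball G x r) := by ring
      _ ≤ volG G (ball G x r) + cutG G (ball G x r) := by linarith
      _ ≤ volG G (ball G x (r+1)) := by linarith

lemma exists_small_cut (G : SimpleGraph V) (hc : G.Connected)
    (hn : 1 < Fintype.card V) {φ : ℝ} (hφ0 : 0 < φ) (hφ1 : φ ≤ 1) (x : V) :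
    ∃ j ≤ Nat.floor (2*Real.log (Fintype.card V)/(φ*Real.log 2)),
      cutG G (ball G x j) < φ * volG G (ball G x j) := by
  classical
  set L := 2*Real.log (Fintype.card V)/(φ*Real.log 2) with hLdef
  set R := Nat.floor L with hRdef
  by_contra hcon
  push_neg at hcon
  have hgrow := vol_ball_growth G hc x hφ0.le (R+1) (fun j hj => hcon j (by omega))
  have hlog2 : (0:ℝ) < Real.log 2 := Real.log_pos (by norm_num)
  have hvol0 : (1:ℝ) ≤ volG G (ball G x 0) := by
    have h1 := card_le_vol G hc hn (ball G x 0)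
    have hb : (1:ℝ) ≤ ((ball G x 0).card : ℝ) := by
      exact_mod_cast Finset.card_pos.mpr ⟨x, self_mem_ball⟩
    linarith
  have hupper := vol_le_sq G (ball G x (R+1))
  have hpownn : (0:ℝ) ≤ (1+φ)^(R+1) := pow_nonneg (by linarith) _
  have hpow : (1+φ)^(R+1) ≤ (Fintype.card V:ℝ)^2 := by nlinarith
  have h2 : Real.exp (φ * Real.log 2) ≤ 1 + φ := by
    have hcv := convexOn_exp.2 (Set.mem_univ (0:ℝ)) (Set.mem_univ (Real.log 2))
      (by linarith : (0:ℝ) ≤ 1-φ) hφ0.le (by ring)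
    simp only [smul_eq_mul, mul_zero, zero_add, Real.exp_zero, mul_one,
      Real.exp_log (by norm_num : (0:ℝ) < 2)] at hcv
    linarith
  have hlog1 : φ * Real.log 2 ≤ Real.log (1+φ) := by
    calc φ*Real.log 2 = Real.log (Real.exp (φ*Real.log 2)) := (Real.log_exp _).symm
      _ ≤ Real.log (1+φ) := Real.log_le_log (Real.exp_pos _) h2
  have hlogpow : ((R:ℝ)+1) * Real.log (1+φ) ≤ 2 * Real.log (Fintype.card V) := by
    have hll := Real.log_le_log (pow_pos (by linarith : (0:ℝ) < 1+φ) (R+1)) hpow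
    rw [Real.log_pow, Real.log_pow] at hll
    push_cast at hll
    linarith
  have hL : ((R:ℝ)+1) ≤ L := by
    rw [hLdef, le_div_iff₀ (by positivity)]
    calc ((R:ℝ)+1)*(φ*Real.log 2) ≤ ((R:ℝ)+1)*Real.log (1+φ) :=
          mul_le_mul_of_nonneg_left hlog1 (by positivity)
      _ ≤ 2*Real.log (Fintype.card V) := hlogpow
  have hfl := Nat.lt_floor_add_one L
  rw [← hRdef] at hfl
  linarith

end Stmt13Aux

namespace Stmt13Aux
variable {V : Type*} [Fintype V] [DecidableEq V]

lemma singleton_ratio (G : SimpleGraph V) (hc : G.Connected)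
    (hn : 1 < Fintype.card V) (v : V) : cutG G {v} / volG G {v} = 1 := by
  classical
  have hd : 0 < G.degree v := degree_pos G hc hn v
  have hvol : volG G {v} = (G.degree v : ℝ) := by
    unfold volG; rw [Finset.sum_singleton]
  have hcut : cutG G {v} = (G.degree v : ℝ) := by
    unfold cutG
    rw [Finset.sum_singleton]
    have hsplit := Finset.sum_compl_add_sum ({v} : Finset V)
      (fun w => if G.Adj v w then (1:ℝ) else 0)
    rw [Finset.sum_singleton] at hsplit
    simp only [SimpleGraph.irrefl, if_false, add_zero] at hsplit
    rw [hsplit, Finset.sum_boole]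
    rw [← SimpleGraph.neighborFinset_eq_filter]
    rfl
  rw [hcut, hvol, div_self]
  exact_mod_cast hd.ne'

end Stmt13Aux


/-- If a connected graph has `k`-way sparsest cut `φ_k > 0`, then its diameter is
`O(k log n / φ_k)`. -/
theorem stmt13 :
    ∃ c : ℝ, 0 < c ∧
      ∀ (n k : ℕ) (G : SimpleGraph (Fin n)), 2 ≤ n → 1 ≤ k → k ≤ n →
        G.Connected → 0 < kwayConductance G k →
        (G.diam : ℝ) ≤ c * k * Real.log n / kwayConductance G k := by
  classical
  refine ⟨11, by norm_num, ?_⟩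
  intro n k G hn hk hkn hc hφ
  set φ := kwayConductance G k with hφdef
  have hcard : Fintype.card (Fin n) = n := Fintype.card_fin n
  have hn1 : 1 < Fintype.card (Fin n) := by rw [hcard]; omega
  haveI : Nonempty (Fin n) := ⟨⟨0, by omega⟩⟩
  haveI : Nonempty (Fin k) := ⟨⟨0, by omega⟩⟩
  have hlog2 : (0:ℝ) < Real.log 2 := Real.log_pos (by norm_num)
  have hlogn : Real.log 2 ≤ Real.log n :=
    Real.log_le_log (by norm_num) (by exact_mod_cast hn)
  have hlognpos : (0:ℝ) < Real.log n := lt_of_lt_of_le hlog2 hlogn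
  have hbdd : BddBelow {r | ∃ P : Fin k → Finset (Fin n), (∀ i, (P i).Nonempty) ∧
      (Pairwise fun i j => Disjoint (P i) (P j)) ∧
      r = ⨆ i : Fin k, cutG G (P i) / volG G (P i)} := by
    refine ⟨0, fun r hr => ?_⟩
    obtain ⟨P, h1, h2, rfl⟩ := hr
    exact Real.iSup_nonneg fun i =>
      div_nonneg (Stmt13Aux.cut_nonneg G (P i)) (Stmt13Aux.vol_nonneg G (P i))
  -- φ ≤ 1
  have hφ1 : φ ≤ 1 := by
    rw [hφdef, kwayConductance]
    refine csInf_le hbdd ⟨fun i => {Fin.castLE hkn i},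
      fun i => Finset.singleton_nonempty _, ?_, ?_⟩
    · intro i j hij
      rw [Finset.disjoint_singleton]
      exact fun h => hij (Fin.castLE_injective hkn h)
    · have h1 : ∀ i : Fin k,
          cutG G {Fin.castLE hkn i} / volG G {Fin.castLE hkn i} = 1 := fun i =>
        Stmt13Aux.singleton_ratio G hc hn1 _
      simp only [h1, ciSup_const]
  set L : ℝ := 2*Real.log n/(φ*Real.log 2) with hLdef
  set R : ℕ := Nat.floor L with hRdef
  have hsc : ∀ x : Fin n, ∃ j ≤ R,
      cutG G (Stmt13Aux.ball G x j) < φ * volG G (Stmt13Aux.ball G x j) := by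
    have hlogcard : Real.log (Fintype.card (Fin n)) = Real.log n := by rw [hcard]
    intro x
    have := Stmt13Aux.exists_small_cut G hc hn1 hφ hφ1 x
    rwa [hlogcard] at this
  set s : ℕ := 2*R+3 with hsdef
  have hmain : G.diam < k*s := by
    by_contra hD
    push_neg at hD
    obtain ⟨u, v, huv⟩ := SimpleGraph.exists_dist_eq_diam (G := G)
    obtain ⟨p, hp⟩ := hc.exists_walk_length_eq_dist u v
    have hplen : p.length = G.diam := by rw [hp, huv]
    set c' : Fin k → Fin n := fun i => p.getVert (i.val * s) with hc'
    have hile : ∀ i : Fin k, i.val * s ≤ p.length := by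
      intro i
      have h1 : (i.val+1) * s ≤ k * s := Nat.mul_le_mul_right s i.isLt
      have h2 : i.val * s ≤ (i.val+1)*s := Nat.mul_le_mul_right s (Nat.le_succ _)
      exact le_trans h2 (le_trans h1 (hD.trans hplen.symm.le))
    have hdist : ∀ i : Fin k, G.dist u (c' i) = i.val * s := fun i =>
      Stmt13Aux.dist_getVert_eq G hc p hp (hile i)
    choose j hjR hjcut using fun i : Fin k => hsc (c' i)
    set P : Fin k → Finset (Fin n) := fun i => Stmt13Aux.ball G (c' i) (j i) with hP
    have hPne : ∀ i, (P i).Nonempty := fun i => ⟨c' i, Stmt13Aux.self_mem_ball⟩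
    have haux : ∀ a b : Fin k, a < b → Disjoint (P a) (P b) := by
      intro a b hab
      rw [Finset.disjoint_left]
      intro w hwa hwb
      have h1 : G.dist (c' a) w ≤ R := le_trans (Stmt13Aux.mem_ball.mp hwa) (hjR a)
      have h2 : G.dist (c' b) w ≤ R := le_trans (Stmt13Aux.mem_ball.mp hwb) (hjR b)
      have h3 : G.dist (c' a) (c' b) ≤ G.dist (c' a) w + G.dist w (c' b) :=
        hc.dist_triangle
      rw [SimpleGraph.dist_comm (u := w)] at h3
      have h4 : G.dist u (c' b) ≤ G.dist u (c' a) + G.dist (c' a) (c' b) :=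
        hc.dist_triangle
      rw [hdist a, hdist b] at h4
      have h5 : a.val * s + s ≤ b.val * s := by
        have h6 := Nat.mul_le_mul_right s (Nat.succ_le_of_lt hab)
        rwa [Nat.succ_mul] at h6
      have h7 : a.val*s + s ≤ a.val*s + G.dist (c' a) (c' b) := le_trans h5 h4
      have h8 : s ≤ G.dist (c' a) (c' b) := Nat.le_of_add_le_add_left h7
      omega
    have hPdisj : Pairwise fun a b => Disjoint (P a) (P b) := by
      intro a b hab
      rcases hab.lt_or_gt with h | h
      · exact haux a b h
      · exact (haux b a h).symm
    have hle : φ ≤ ⨆ i, cutG G (P i) / volG G (P i) := by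
      rw [hφdef, kwayConductance]
      exact csInf_le hbdd ⟨P, hPne, hPdisj, rfl⟩
    have hlt : ∀ i, cutG G (P i) / volG G (P i) < φ := by
      intro i
      have hv := Stmt13Aux.vol_pos G hc hn1 (hPne i)
      rw [div_lt_iff₀ hv]
      exact hjcut i
    obtain ⟨i₀, hi₀⟩ := Finite.exists_max fun i => cutG G (P i) / volG G (P i)
    have hsup : (⨆ i, cutG G (P i) / volG G (P i)) ≤ cutG G (P i₀)/volG G (P i₀) :=
      ciSup_le hi₀
    have := hlt i₀
    linarith
  -- final arithmetic
  have hk0 : (0:ℝ) ≤ k := Nat.cast_nonneg k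
  have hRL : (R:ℝ) ≤ L := Nat.floor_le (by positivity)
  set X : ℝ := Real.log n/(φ*Real.log 2) with hXdef
  have hX1 : (1:ℝ) ≤ X := by
    rw [hXdef, le_div_iff₀ (by positivity)]
    nlinarith
  have hL4 : L = 2*X := by rw [hLdef, hXdef]; ring
  have h7 : 2*L+3 ≤ 7*X := by rw [hL4]; linarith
  have h711 : 7*X ≤ 11*Real.log n/φ := by
    rw [hXdef, ← mul_div_assoc,
      div_le_div_iff₀ (by positivity : (0:ℝ) < φ*Real.log 2) hφ]
    have hd9 := Real.log_two_gt_d9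
    nlinarith [mul_lt_mul_of_pos_left hd9 (mul_pos hlognpos hφ)]
  have hdiam : (G.diam : ℝ) ≤ (k:ℝ) * (2*(R:ℝ)+3) := by
    have : (G.diam : ℝ) ≤ ((k*s : ℕ) : ℝ) := by exact_mod_cast hmain.le
    rw [hsdef] at this
    push_cast at this
    linarith
  calc (G.diam : ℝ) ≤ (k:ℝ) * (2*(R:ℝ)+3) := hdiam
    _ ≤ (k:ℝ) * (2*L+3) := mul_le_mul_of_nonneg_left (by linarith) hk0
    _ ≤ (k:ℝ) * (7*X) := mul_le_mul_of_nonneg_left h7 hk0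
    _ ≤ (k:ℝ) * (11*Real.log n/φ) := mul_le_mul_of_nonneg_left h711 hk0
    _ = 11 * k * Real.log n / φ := by ring
end

section
/- Consider the graph G_{k,l} formed by a cycle on k vertices connected (by identifying or attaching the cycle vertex v₀ to a clique vertex via an edge) to a complete graph K_l on l vertices. Then the second-smallest eigenvalue of the normalized Laplacian of G_{k,l} satisfies λ₂(G_{k,l}) ≤ 1 − cos(2π/k) = O(1/k²). -/
open Matrix

/-- Adjacency matrix of the graph `G_{k,l}`: a cycle `C_k` whose vertex `0` is
joined by an edge to vertex `0` of a clique `K_l`. -/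
def cycleCliqueAdj (k l : ℕ) (hk : 3 ≤ k) (hl : 1 ≤ l) :
    Matrix (Fin k ⊕ Fin l) (Fin k ⊕ Fin l) ℝ :=
  fun u v =>
    match u, v with
    | Sum.inl i, Sum.inl j => if j = i + ⟨1, by omega⟩ ∨ i = j + ⟨1, by omega⟩ then 1 else 0
    | Sum.inl i, Sum.inr j => if i = ⟨0, by omega⟩ ∧ j = ⟨0, by omega⟩ then 1 else 0
    | Sum.inr i, Sum.inl j => if j = ⟨0, by omega⟩ ∧ i = ⟨0, by omega⟩ then 1 else 0
    | Sum.inr i, Sum.inr j => if i ≠ j then 1 else 0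

/-!
Courant–Fischer for `λ₂`: expanding in the orthonormal eigenbasis, every nonzero `z ⊥ v₀` has
`zᵀLz ≥ μ₁ zᵀz`. As `v₀` is not known explicitly, we work in the plane spanned by a test vector
`x` and the kernel vector `√deg`; this plane contains a nonzero vector orthogonal to `v₀`, and since
`x ⊥ √deg` and `L √deg = 0`, the Rayleigh quotient `R` on the plane is at most `max (R x) 0`.

The test vector is `sin (2πi/k)` on the cycle and `0` on the clique. It vanishes at the attaching
vertex, so it only sees cycle vertices of degree `2`, where `L` acts as `1 - (shift + shift⁻¹)/2`
and `x` is an eigenvector for `1 - cos (2π/k)`. It is orthogonal to `√deg` because the sines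
over a full period sum to zero.
-/

open Real

section Eigenbasis

variable {ι N : Type*} [Fintype ι] [Fintype N] [DecidableEq N]

theorem transpose_mul_self_eq_one_of_orthonormal [DecidableEq ι] (e : ι ≃ N) {v : ι → N → ℝ}
    (horth : ∀ i j, v i ⬝ᵥ v j = if i = j then 1 else 0) : (of v)ᵀ * of v = 1 := by
  refine (mul_eq_one_comm_of_equiv e).mp ?_
  ext i j
  simpa [mul_apply, one_apply, dotProduct] using horth i j

theorem sum_dotProduct_smul_eq_self {v : ι → N → ℝ} (hv : (of v)ᵀ * of v = 1) (z : N → ℝ) :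
    ∑ i, (v i ⬝ᵥ z) • v i = z := by
  have h : (of v)ᵀ *ᵥ (of v *ᵥ z) = z := by rw [mulVec_mulVec, hv, one_mulVec]
  rwa [mulVec_transpose, vecMul_eq_sum] at h

theorem dotProduct_mulVec_eq_sum_of_eigenbasis {v : ι → N → ℝ} (hv : (of v)ᵀ * of v = 1)
    {L : Matrix N N ℝ} {μ : ι → ℝ} (heig : ∀ i, L *ᵥ v i = μ i • v i) (z : N → ℝ) :
    z ⬝ᵥ (L *ᵥ z) = ∑ i, μ i * (v i ⬝ᵥ z) ^ 2 := by
  calc z ⬝ᵥ (L *ᵥ z) = z ⬝ᵥ (L *ᵥ ∑ i, (v i ⬝ᵥ z) • v i) := by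
        rw [sum_dotProduct_smul_eq_self hv]
    _ = ∑ i, μ i * (v i ⬝ᵥ z) ^ 2 := by
        simp only [mulVec_sum, mulVec_smul, heig, smul_smul, dotProduct_sum, dotProduct_smul,
          smul_eq_mul]
        exact Finset.sum_congr rfl fun i _ => by rw [dotProduct_comm z]; ring

theorem dotProduct_self_eq_sum_of_eigenbasis {v : ι → N → ℝ} (hv : (of v)ᵀ * of v = 1)
    (z : N → ℝ) : z ⬝ᵥ z = ∑ i, (v i ⬝ᵥ z) ^ 2 := by
  simpa using dotProduct_mulVec_eq_sum_of_eigenbasis hv (L := 1) (μ := 1) (by simp) z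

end Eigenbasis

theorem exists_smul_add_smul_ne_zero_orthogonal {N : Type*} [Fintype N] {x w : N → ℝ}
    (hx : x ≠ 0) (hw : w ≠ 0) (hxw : x ⬝ᵥ w = 0) (u : N → ℝ) :
    ∃ a b : ℝ, a • x + b • w ≠ 0 ∧ (a • x + b • w) ⬝ᵥ u = 0 := by
  by_cases hxu : x ⬝ᵥ u = 0
  · exact ⟨1, 0, by simpa using hx, by simpa using hxu⟩
  refine ⟨w ⬝ᵥ u, -(x ⬝ᵥ u), fun h => ?_, ?_⟩
  · have := congrArg (· ⬝ᵥ w) h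
    simp only [add_dotProduct, smul_dotProduct, hxw, zero_dotProduct, smul_eq_mul] at this
    simp_all
  · simp only [add_dotProduct, smul_dotProduct, smul_eq_mul]
    ring

theorem smul_add_smul_dotProduct_mulVec_le {N : Type*} [Fintype N] {L : Matrix N N ℝ}
    (hL : L.IsSymm) {x w : N → ℝ} (hLw : L *ᵥ w = 0) (hxw : x ⬝ᵥ w = 0) {c : ℝ} (hc : 0 ≤ c)
    (hxL : x ⬝ᵥ (L *ᵥ x) ≤ c * (x ⬝ᵥ x)) (a b : ℝ) :
    (a • x + b • w) ⬝ᵥ (L *ᵥ (a • x + b • w)) ≤ c * ((a • x + b • w) ⬝ᵥ (a • x + b • w)) := by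
  have hwL : w ⬝ᵥ (L *ᵥ x) = 0 := by
    rw [dotProduct_mulVec, ← mulVec_transpose, hL.eq, hLw, zero_dotProduct]
  have hwx : w ⬝ᵥ x = 0 := by rw [dotProduct_comm, hxw]
  simp only [mulVec_add, mulVec_smul, hLw, smul_zero, add_zero, add_dotProduct, dotProduct_add,
    smul_dotProduct, dotProduct_smul, smul_eq_mul, hwL, hxw, hwx]
  have hww : 0 ≤ w ⬝ᵥ w := Finset.sum_nonneg fun i _ => mul_self_nonneg (w i)
  nlinarith [mul_le_mul_of_nonneg_left hxL (sq_nonneg a),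
    mul_nonneg hc (mul_nonneg (sq_nonneg b) hww)]

section SecondEigenvalue

variable {N : Type*} [Fintype N] [DecidableEq N] {m : ℕ} {L : Matrix N N ℝ} {μ : Fin m → ℝ}
  {v : Fin m → N → ℝ}

theorem eigenvalue_one_mul_le_of_orthogonal (hm : 1 < m) (e : Fin m ≃ N) (hmono : Monotone μ)
    (horth : ∀ i j, v i ⬝ᵥ v j = if i = j then 1 else 0) (heig : ∀ i, L *ᵥ v i = μ i • v i)
    {z : N → ℝ} (hz : z ⬝ᵥ v ⟨0, by omega⟩ = 0) :
    μ ⟨1, hm⟩ * (z ⬝ᵥ z) ≤ z ⬝ᵥ (L *ᵥ z) := by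
  have hv := transpose_mul_self_eq_one_of_orthonormal e horth
  rw [dotProduct_self_eq_sum_of_eigenbasis hv, dotProduct_mulVec_eq_sum_of_eigenbasis hv heig,
    Finset.mul_sum]
  refine Finset.sum_le_sum fun i _ => ?_
  by_cases hi : i = ⟨0, by omega⟩
  · rw [hi, dotProduct_comm, hz]
    simp
  · have h1i : (⟨1, hm⟩ : Fin m) ≤ i := by
      rw [Fin.le_def]
      exact Nat.one_le_iff_ne_zero.mpr fun h => hi (Fin.ext h)
    exact mul_le_mul_of_nonneg_right (hmono h1i) (sq_nonneg _)

theorem eigenvalue_one_le_of_test_vector (hm : 1 < m) (e : Fin m ≃ N) (hmono : Monotone μ)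
    (horth : ∀ i j, v i ⬝ᵥ v j = if i = j then 1 else 0) (heig : ∀ i, L *ᵥ v i = μ i • v i)
    (hL : L.IsSymm) {x w : N → ℝ} (hLw : L *ᵥ w = 0) (hw : w ≠ 0) (hx : x ≠ 0)
    (hxw : x ⬝ᵥ w = 0) {c : ℝ} (hc : 0 ≤ c) (hxL : x ⬝ᵥ (L *ᵥ x) ≤ c * (x ⬝ᵥ x)) :
    μ ⟨1, hm⟩ ≤ c := by
  obtain ⟨a, b, hz, hzv⟩ := exists_smul_add_smul_ne_zero_orthogonal hx hw hxw (v ⟨0, by omega⟩)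
  have hzz : 0 < (a • x + b • w) ⬝ᵥ (a • x + b • w) :=
    (Finset.sum_nonneg fun i _ => mul_self_nonneg _).lt_of_ne' (dotProduct_self_eq_zero.not.mpr hz)
  refine le_of_mul_le_mul_right ?_ hzz
  exact (eigenvalue_one_mul_le_of_orthogonal hm e hmono horth heig hzv).trans
    (smul_add_smul_dotProduct_mulVec_le hL hLw hxw hc hxL a b)

end SecondEigenvalue

section NormalizedLaplacian

variable {V : Type*} [Fintype V]

theorem wdeg_eq_mulVec_one (A : Matrix V V ℝ) (u : V) :
    wdeg A u = (A *ᵥ 1) u := by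
  simp [mulVec, dotProduct, wdeg]

theorem wdeg_pos_of_pos {A : Matrix V V ℝ} (hA : ∀ u w, 0 ≤ A u w)
    {u : V} (h : ∃ w, 0 < A u w) : 0 < wdeg A u := by
  obtain ⟨w, hw⟩ := h
  exact hw.trans_le (Finset.single_le_sum (fun w _ => hA u w) (Finset.mem_univ w))

variable [DecidableEq V]

theorem normLap_mulVec_apply (A : Matrix V V ℝ) (x : V → ℝ) (u : V) :
    (normLap A *ᵥ x) u = x u - (√(wdeg A u))⁻¹ * (A *ᵥ fun w => (√(wdeg A w))⁻¹ * x w) u := by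
  have hD (y : V → ℝ) :
      (diagonal fun u => 1 / √(wdeg A u)) *ᵥ y = fun w => (√(wdeg A w))⁻¹ * y w :=
    funext fun w => by rw [mulVec_diagonal, one_div]
  rw [normLap, sub_mulVec, one_mulVec, ← mulVec_mulVec, ← mulVec_mulVec, hD, hD]
  rfl

theorem normLap_isSymm {A : Matrix V V ℝ} (hA : A.IsSymm) : (normLap A).IsSymm := by
  simp [normLap, IsSymm, transpose_mul, hA.eq, Matrix.mul_assoc]

theorem normLap_mulVec_sqrt_wdeg {A : Matrix V V ℝ} (hd : ∀ u, 0 < wdeg A u) :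
    normLap A *ᵥ (fun u => √(wdeg A u)) = 0 := by
  funext u
  have hu := Real.sqrt_pos.mpr (hd u)
  have hone : (fun w => (√(wdeg A w))⁻¹ * √(wdeg A w)) = 1 :=
    funext fun w => inv_mul_cancel₀ (Real.sqrt_pos.mpr (hd w)).ne'
  rw [normLap_mulVec_apply, hone, ← wdeg_eq_mulVec_one, Pi.zero_apply, sub_eq_zero,
    eq_inv_mul_iff_mul_eq₀ hu.ne', Real.mul_self_sqrt (hd u).le]

theorem mul_normLap_mulVec_apply_of_wdeg_eq {A : Matrix V V ℝ} {d : ℝ} (hd : 0 ≤ d) {x : V → ℝ}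
    (hx : ∀ u, x u ≠ 0 → wdeg A u = d) (u : V) :
    x u * (normLap A *ᵥ x) u = x u ^ 2 - x u * (A *ᵥ x) u / d := by
  have hscale (w : V) : (√(wdeg A w))⁻¹ * x w = (√d)⁻¹ * x w := by
    by_cases h : x w = 0
    · simp [h]
    · rw [hx w h]
  have hscaled : (fun w => (√(wdeg A w))⁻¹ * x w) = (√d)⁻¹ • x := funext hscale
  have hd' : (√d)⁻¹ * (√d)⁻¹ = d⁻¹ := by rw [← mul_inv, Real.mul_self_sqrt hd]
  rw [normLap_mulVec_apply, hscaled, mulVec_smul, Pi.smul_apply, smul_eq_mul]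
  linear_combination (-(√d)⁻¹ * (A *ᵥ x) u) * hscale u - (x u * (A *ᵥ x) u) * hd'

end NormalizedLaplacian

section CycleSines

theorem Real.sin_two_pi_mul_natCast_mod_div (n k : ℕ) :
    sin (2 * π * ↑(n % k) / k) = sin (2 * π * n / k) := by
  rcases Nat.eq_zero_or_pos k with rfl | hk
  · simp
  conv_rhs => rw [← Nat.mod_add_div n k]
  have hk' : (k : ℝ) ≠ 0 := by positivity
  rw [show 2 * π * ↑(n % k + k * (n / k)) / k = 2 * π * ↑(n % k) / k + ↑(n / k) * (2 * π) by
    push_cast; field_simp, sin_add_nat_mul_two_pi]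

variable {k : ℕ}

theorem Fin.sin_two_pi_mul_add_div (a b : Fin k) :
    sin (2 * π * ↑(a + b : Fin k) / k) = sin (2 * π * (a + b) / k) := by
  rw [Fin.val_add, sin_two_pi_mul_natCast_mod_div, Nat.cast_add]

theorem Fin.sin_two_pi_mul_sub_div (a b : Fin k) :
    sin (2 * π * ↑(a - b : Fin k) / k) = sin (2 * π * (a - b) / k) := by
  have hk' : (k : ℝ) ≠ 0 := by have := a.pos; positivity
  rw [Fin.val_sub, sin_two_pi_mul_natCast_mod_div, Nat.cast_add, Nat.cast_sub b.2.le,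
    show 2 * π * (k - b + a) / k = 2 * π * (a - b) / k + 2 * π by field_simp; ring,
    sin_add_two_pi]

-- `i ↦ -i` permutes `Fin k` and negates the summand.
theorem Fin.sum_sin_two_pi_mul_div [NeZero k] : ∑ i : Fin k, sin (2 * π * i / k) = 0 := by
  have hneg (i : Fin k) : sin (2 * π * ↑(-i) / k) = -sin (2 * π * i / k) := by
    rw [neg_eq_zero_sub, Fin.sin_two_pi_mul_sub_div, Fin.val_zero, Nat.cast_zero, zero_sub,
      mul_neg, neg_div, sin_neg]
  have hsum := Equiv.sum_comp (Equiv.neg (Fin k)) fun i => sin (2 * π * i / k)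
  simp only [Equiv.neg_apply, hneg, Finset.sum_neg_distrib] at hsum
  linarith

end CycleSines

theorem Fin.add_one_ne_sub_one {k : ℕ} (hk : 3 ≤ k) (i : Fin k) :
    i + ⟨1, by omega⟩ ≠ i - ⟨1, by omega⟩ := by
  have : NeZero k := ⟨by omega⟩
  rw [Ne, eq_sub_iff_add_eq, add_assoc, add_eq_left, Fin.ext_iff, Fin.val_add]
  simp [Nat.mod_eq_of_lt (show 1 + 1 < k by omega)]

section CycleClique

variable {k l : ℕ} (hk : 3 ≤ k) (hl : 1 ≤ l)

theorem cycleCliqueAdj_isSymm : (cycleCliqueAdj k l hk hl).IsSymm := by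
  rw [IsSymm.ext_iff]
  rintro (i | i) (j | j) <;> simp only [cycleCliqueAdj, or_comm, ne_comm]

theorem cycleCliqueAdj_inl_inl (i j : Fin k) :
    cycleCliqueAdj k l hk hl (.inl i) (.inl j) =
      (if j = i + ⟨1, by omega⟩ then 1 else 0) + (if j = i - ⟨1, by omega⟩ then 1 else 0) := by
  have : NeZero k := ⟨by omega⟩
  have hne := Fin.add_one_ne_sub_one hk i
  have hprev : i = j + ⟨1, by omega⟩ ↔ j = i - ⟨1, by omega⟩ := by
    rw [eq_sub_iff_add_eq, eq_comm]
  simp only [cycleCliqueAdj, hprev]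
  split_ifs <;> simp_all

theorem cycleCliqueAdj_mulVec_inl (x : Fin k ⊕ Fin l → ℝ) (i : Fin k) :
    (cycleCliqueAdj k l hk hl *ᵥ x) (.inl i) =
      x (.inl (i + ⟨1, by omega⟩)) + x (.inl (i - ⟨1, by omega⟩)) +
        if i = ⟨0, by omega⟩ then x (.inr ⟨0, by omega⟩) else 0 := by
  simp only [mulVec, dotProduct, Fintype.sum_sum_type, cycleCliqueAdj_inl_inl, add_mul, ite_mul,
    one_mul, zero_mul, Finset.sum_add_distrib, Finset.sum_ite_eq', Finset.mem_univ, if_true]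
  simp [cycleCliqueAdj, ite_and]

theorem cycleCliqueAdj_nonneg (u w : Fin k ⊕ Fin l) : 0 ≤ cycleCliqueAdj k l hk hl u w := by
  rcases u with i | i <;> rcases w with j | j <;> simp only [cycleCliqueAdj] <;> split_ifs <;>
    norm_num

theorem wdeg_cycleCliqueAdj_pos (u : Fin k ⊕ Fin l) : 0 < wdeg (cycleCliqueAdj k l hk hl) u := by
  refine wdeg_pos_of_pos (cycleCliqueAdj_nonneg hk hl) ?_
  rcases u with i | j
  · exact ⟨.inl (i + ⟨1, by omega⟩), by simp [cycleCliqueAdj]⟩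
  · by_cases hj : j = ⟨0, by omega⟩
    · exact ⟨.inl ⟨0, by omega⟩, by simp [cycleCliqueAdj, hj]⟩
    · exact ⟨.inr ⟨0, by omega⟩, by simp [cycleCliqueAdj, hj]⟩

theorem wdeg_cycleCliqueAdj_inl {i : Fin k} (hi : i ≠ ⟨0, by omega⟩) :
    wdeg (cycleCliqueAdj k l hk hl) (.inl i) = 2 := by
  rw [wdeg_eq_mulVec_one, cycleCliqueAdj_mulVec_inl, if_neg hi]
  norm_num

end CycleClique

noncomputable def cycleSineVector (k l : ℕ) : Fin k ⊕ Fin l → ℝ :=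
  Sum.elim (fun i => sin (2 * π * i / k)) 0

theorem cycleSineVector_ne_zero {k : ℕ} (l : ℕ) (hk : 3 ≤ k) : cycleSineVector k l ≠ 0 := by
  have hk' : (3 : ℝ) ≤ k := by exact_mod_cast hk
  intro h
  have h1 := congrFun h (.inl ⟨1, by omega⟩)
  simp only [cycleSineVector, Sum.elim_inl, Nat.cast_one, mul_one, Pi.zero_apply] at h1
  refine (sin_pos_of_pos_of_lt_pi (by positivity) ?_).ne' h1
  rw [div_lt_iff₀ (by positivity)]
  nlinarith [pi_pos]

section CycleSineVector

variable {k l : ℕ} (hk : 3 ≤ k) (hl : 1 ≤ l)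

theorem wdeg_eq_two_of_cycleSineVector_ne_zero {u : Fin k ⊕ Fin l}
    (hu : cycleSineVector k l u ≠ 0) : wdeg (cycleCliqueAdj k l hk hl) u = 2 := by
  rcases u with i | j
  · refine wdeg_cycleCliqueAdj_inl hk hl fun hi => hu ?_
    simp [cycleSineVector, hi]
  · simp [cycleSineVector] at hu

theorem cycleSineVector_mul_mulVec (u : Fin k ⊕ Fin l) :
    cycleSineVector k l u * (cycleCliqueAdj k l hk hl *ᵥ cycleSineVector k l) u =
      2 * cos (2 * π / k) * cycleSineVector k l u ^ 2 := by
  rcases u with i | j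
  · rw [cycleCliqueAdj_mulVec_inl]
    simp only [cycleSineVector, Sum.elim_inl, Sum.elim_inr, Pi.zero_apply, ite_self, add_zero,
      Fin.sin_two_pi_mul_add_div, Fin.sin_two_pi_mul_sub_div, Nat.cast_one, mul_add,
      mul_sub, add_div, sub_div, mul_one, sin_add, sin_sub]
    ring
  · simp [cycleSineVector]

theorem dotProduct_normLap_mulVec_cycleSineVector :
    cycleSineVector k l ⬝ᵥ (normLap (cycleCliqueAdj k l hk hl) *ᵥ cycleSineVector k l) =
      (1 - cos (2 * π / k)) * (cycleSineVector k l ⬝ᵥ cycleSineVector k l) := by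
  simp only [dotProduct, Finset.mul_sum]
  refine Finset.sum_congr rfl fun u _ => ?_
  rw [mul_normLap_mulVec_apply_of_wdeg_eq zero_le_two
    (fun _ => wdeg_eq_two_of_cycleSineVector_ne_zero hk hl), cycleSineVector_mul_mulVec]
  ring

theorem cycleSineVector_dotProduct_sqrt_wdeg :
    cycleSineVector k l ⬝ᵥ (fun u => √(wdeg (cycleCliqueAdj k l hk hl) u)) = 0 := by
  have : NeZero k := ⟨by omega⟩
  have hscale (u : Fin k ⊕ Fin l) :
      cycleSineVector k l u * √(wdeg (cycleCliqueAdj k l hk hl) u) =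
        √2 * cycleSineVector k l u := by
    by_cases hu : cycleSineVector k l u = 0
    · simp [hu]
    · rw [wdeg_eq_two_of_cycleSineVector_ne_zero hk hl hu, mul_comm]
  rw [dotProduct, Finset.sum_congr rfl fun u _ => hscale u, ← Finset.mul_sum,
    Fintype.sum_sum_type]
  simp [cycleSineVector, Fin.sum_sin_two_pi_mul_div]

end CycleSineVector

/-- The second-smallest normalized-Laplacian eigenvalue of `G_{k,l}` is at most
`1 - cos(2π/k)`. -/
theorem stmt14 (k l : ℕ) (hk : 3 ≤ k) (hl : 1 ≤ l)
    (μ : Fin (k + l) → ℝ) (v : Fin (k + l) → (Fin k ⊕ Fin l) → ℝ)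
    (hmono : Monotone μ)
    (horth : ∀ i j, v i ⬝ᵥ v j = if i = j then (1 : ℝ) else 0)
    (heig : ∀ i, normLap (cycleCliqueAdj k l hk hl) *ᵥ v i = μ i • v i) :
    μ ⟨1, by omega⟩ ≤ 1 - Real.cos (2 * Real.pi / k) := by
  have hdeg := wdeg_cycleCliqueAdj_pos hk hl
  have hsqrt_ne : (fun u => √(wdeg (cycleCliqueAdj k l hk hl) u)) ≠ 0 := fun h =>
    (sqrt_pos.mpr (hdeg (.inl ⟨0, by omega⟩))).ne' (congrFun h _)
  exact eigenvalue_one_le_of_test_vector (by omega) finSumFinEquiv.symm hmono horth heig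
    (normLap_isSymm (cycleCliqueAdj_isSymm hk hl)) (normLap_mulVec_sqrt_wdeg hdeg) hsqrt_ne
    (cycleSineVector_ne_zero l hk) (cycleSineVector_dotProduct_sqrt_wdeg hk hl)
    (sub_nonneg.mpr (cos_le_one _)) (dotProduct_normLap_mulVec_cycleSineVector hk hl).le
end
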